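/- arXiv:1510.01314 — 16 statements merged into one kernel-verified Lean document; each statement's English description precedes it below -/
import Mathlib

section
/- Let f : I → ℝ be twice differentiable on the interior of an interval I, and suppose d ≤ f''(t) ≤ D for all t in the interior of I. Then for all a, b in the interior of I and ν ∈ [0,1]: (1/2)·ν·(1−ν)·d·(b−a)² ≤ (1−ν)·f(a) + ν·f(b) − f((1−ν)·a + ν·b) ≤ (1/2)·ν·(1−ν)·D·(b−a)². -/
/-!
On an open convex set where `c ≤ f''`, the function `f - c x² / 2` has nonnegative second
derivative, hence is convex; its Jensen inequality at `a`, `b` is exactly the lower bound, since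
the Jensen gap of `x ↦ c x² / 2` is `c ν (1 - ν) (b - a)² / 2`. The upper bound is the lower
bound for `-f`, whose second derivative is bounded below by `-D`.
-/

open Set

lemma convexOn_sub_half_mul_sq {s : Set ℝ} (hs : Convex ℝ s) (hso : IsOpen s)
    {f f' f'' : ℝ → ℝ} (hf : ∀ t ∈ s, HasDerivAt f (f' t) t)
    (hf' : ∀ t ∈ s, HasDerivAt f' (f'' t) t) {c : ℝ} (hc : ∀ t ∈ s, c ≤ f'' t) :
    ConvexOn ℝ s (fun x ↦ f x - c / 2 * x ^ 2) := by
  refine convexOn_of_hasDerivWithinAt2_nonneg (f' := fun x ↦ f' x - c * x)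
    (f'' := fun x ↦ f'' x - c) hs ?_ ?_ ?_ ?_
  · exact fun t ht ↦ ((hf t ht).continuousAt.sub (by fun_prop)).continuousWithinAt
  all_goals rw [hso.interior_eq]
  · intro t ht
    have hsq : HasDerivAt (fun x ↦ c / 2 * x ^ 2) (c * t) t :=
      ((hasDerivAt_pow 2 t).const_mul (c / 2)).congr_deriv (by norm_num; ring)
    exact ((hf t ht).sub hsq).hasDerivWithinAt
  · exact fun t ht ↦ ((hf' t ht).sub (hasDerivAt_const_mul c)).hasDerivWithinAt
  · exact fun t ht ↦ sub_nonneg.mpr (hc t ht)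

lemma half_mul_sq_le_jensenGap {s : Set ℝ} (hs : Convex ℝ s) (hso : IsOpen s)
    {f f' f'' : ℝ → ℝ} (hf : ∀ t ∈ s, HasDerivAt f (f' t) t)
    (hf' : ∀ t ∈ s, HasDerivAt f' (f'' t) t) {c : ℝ} (hc : ∀ t ∈ s, c ≤ f'' t)
    {a b : ℝ} (ha : a ∈ s) (hb : b ∈ s) {ν : ℝ} (hν : ν ∈ Icc (0 : ℝ) 1) :
    1 / 2 * ν * (1 - ν) * c * (b - a) ^ 2 ≤ (1 - ν) * f a + ν * f b - f ((1 - ν) * a + ν * b) := by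
  have jensen := (convexOn_sub_half_mul_sq hs hso hf hf' hc).2 ha hb (sub_nonneg.mpr hν.2) hν.1
    (sub_add_cancel 1 ν)
  simp only [smul_eq_mul] at jensen
  linear_combination jensen

theorem stmt_0 (I : Set ℝ) (hI : I.OrdConnected) (f f' f'' : ℝ → ℝ)
    (hf : ∀ t ∈ interior I, HasDerivAt f (f' t) t)
    (hf' : ∀ t ∈ interior I, HasDerivAt f' (f'' t) t)
    (d D : ℝ) (hd : ∀ t ∈ interior I, d ≤ f'' t) (hD : ∀ t ∈ interior I, f'' t ≤ D)
    (a b : ℝ) (ha : a ∈ interior I) (hb : b ∈ interior I)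
    (ν : ℝ) (hν : ν ∈ Set.Icc (0:ℝ) 1) :
    1/2 * ν * (1 - ν) * d * (b - a)^2 ≤ (1 - ν) * f a + ν * f b - f ((1 - ν) * a + ν * b) ∧
    (1 - ν) * f a + ν * f b - f ((1 - ν) * a + ν * b) ≤ 1/2 * ν * (1 - ν) * D * (b - a)^2 := by
  have hconv : Convex ℝ (interior I) := hI.convex.interior
  have lower := half_mul_sq_le_jensenGap hconv isOpen_interior hf hf' hd ha hb hν
  have upper := half_mul_sq_le_jensenGap hconv isOpen_interior (fun t ht ↦ (hf t ht).neg)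
    (fun t ht ↦ (hf' t ht).neg) (c := -D) (fun t ht ↦ neg_le_neg (hD t ht)) ha hb hν
  simp only [Pi.neg_apply] at upper
  exact ⟨lower, by linarith⟩
end

section
/- For all a, b > 0 and ν ∈ [0,1]: (1/2)·ν·(1−ν)·(ln a − ln b)²·min(a,b) ≤ (1−ν)·a + ν·b − a^(1−ν)·b^ν ≤ (1/2)·ν·(1−ν)·(ln a − ln b)²·max(a,b). -/
/-!
The middle term is the gap at `ν` between the chord of `f x = a ^ (1 - x) * b ^ x` over `[0, 1]`
and `f` itself. Since `f'' = (log a - log b) ^ 2 * f` and `min a b ≤ f ≤ max a b` on `[0, 1]`,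
the bounds follow from the fact that `c ≤ f'' ≤ C` places `f ν` between the chord minus
`C / 2 * ν * (1 - ν)` and the chord minus `c / 2 * ν * (1 - ν)`: `f - c / 2 * x ^ 2` is convex.
-/

open Real Set

theorem apply_le_chord_sub_of_le_deriv2 {f f' f'' : ℝ → ℝ} {c : ℝ}
    (hf : ContinuousOn f (Icc 0 1)) (hf' : ∀ x ∈ Ioo (0 : ℝ) 1, HasDerivAt f (f' x) x)
    (hf'' : ∀ x ∈ Ioo (0 : ℝ) 1, HasDerivAt f' (f'' x) x)
    (hc : ∀ x ∈ Ioo (0 : ℝ) 1, c ≤ f'' x) {t : ℝ} (ht : t ∈ Icc (0 : ℝ) 1) :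
    f t ≤ (1 - t) * f 0 + t * f 1 - c / 2 * t * (1 - t) := by
  have hconv : ConvexOn ℝ (Icc 0 1) (fun x ↦ f x - c / 2 * x ^ 2) := by
    refine convexOn_of_hasDerivWithinAt2_nonneg (f' := fun x ↦ f' x - c * x)
      (f'' := fun x ↦ f'' x - c) (convex_Icc 0 1) (by fun_prop) ?_ ?_ ?_ <;>
      rw [interior_Icc] <;> intro x hx
    · refine ((hf' x hx).sub ((hasDerivAt_pow 2 x).const_mul (c / 2)) |>.congr_deriv ?_)
        |>.hasDerivWithinAt
      ring
    · exact ((hf'' x hx).sub ((hasDerivAt_id x).const_mul c) |>.congr_deriv (by simp))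
        |>.hasDerivWithinAt
    · exact sub_nonneg.2 (hc x hx)
  have := hconv.2 (left_mem_Icc.2 zero_le_one) (right_mem_Icc.2 zero_le_one)
    (sub_nonneg.2 ht.2) ht.1 (by ring)
  simp only [smul_eq_mul, mul_zero, mul_one, zero_add] at this
  linarith

theorem chord_sub_le_apply_of_deriv2_le {f f' f'' : ℝ → ℝ} {C : ℝ}
    (hf : ContinuousOn f (Icc 0 1)) (hf' : ∀ x ∈ Ioo (0 : ℝ) 1, HasDerivAt f (f' x) x)
    (hf'' : ∀ x ∈ Ioo (0 : ℝ) 1, HasDerivAt f' (f'' x) x)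
    (hC : ∀ x ∈ Ioo (0 : ℝ) 1, f'' x ≤ C) {t : ℝ} (ht : t ∈ Icc (0 : ℝ) 1) :
    (1 - t) * f 0 + t * f 1 - C / 2 * t * (1 - t) ≤ f t := by
  have := apply_le_chord_sub_of_le_deriv2 (f := -f) (c := -C) hf.neg
    (fun x hx ↦ (hf' x hx).neg) (fun x hx ↦ (hf'' x hx).neg)
    (fun x hx ↦ neg_le_neg (hC x hx)) ht
  simp only [Pi.neg_apply] at this
  linarith

section WeightedGeometricMean

variable {a b : ℝ}

theorem hasDerivAt_rpow_one_sub_mul_rpow (ha : 0 < a) (hb : 0 < b) (x : ℝ) :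
    HasDerivAt (fun t ↦ a ^ (1 - t) * b ^ t) ((log b - log a) * (a ^ (1 - x) * b ^ x)) x := by
  have hexp := (((hasDerivAt_id x).const_sub 1).const_rpow ha).mul
    ((hasDerivAt_id x).const_rpow hb)
  exact hexp.congr_deriv (by simp only [id]; ring)

theorem min_le_rpow_one_sub_mul_rpow (ha : 0 < a) (hb : 0 < b) {t : ℝ}
    (ht : t ∈ Icc (0 : ℝ) 1) : min a b ≤ a ^ (1 - t) * b ^ t := by
  have hm : 0 < min a b := lt_min ha hb
  calc min a b = min a b ^ (1 - t) * min a b ^ t := by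
        rw [← rpow_add hm, sub_add_cancel, rpow_one]
    _ ≤ a ^ (1 - t) * b ^ t := by
        gcongr
        · linarith [ht.2]
        · exact min_le_left a b
        · exact ht.1
        · exact min_le_right a b

theorem rpow_one_sub_mul_rpow_le_max (ha : 0 < a) (hb : 0 < b) {t : ℝ}
    (ht : t ∈ Icc (0 : ℝ) 1) : a ^ (1 - t) * b ^ t ≤ max a b := by
  calc a ^ (1 - t) * b ^ t ≤ max a b ^ (1 - t) * max a b ^ t := by
        gcongr
        · linarith [ht.2]
        · exact le_max_left a b
        · exact ht.1
        · exact le_max_right a b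
    _ = max a b := by rw [← rpow_add (ha.trans_le (le_max_left a b)), sub_add_cancel, rpow_one]

end WeightedGeometricMean

theorem stmt_2 (a b : ℝ) (ha : 0 < a) (hb : 0 < b) (ν : ℝ) (hν : ν ∈ Set.Icc (0:ℝ) 1) :
    1/2 * ν * (1 - ν) * (Real.log a - Real.log b)^2 * min a b
      ≤ (1 - ν) * a + ν * b - a ^ (1 - ν) * b ^ ν ∧
    (1 - ν) * a + ν * b - a ^ (1 - ν) * b ^ ν
      ≤ 1/2 * ν * (1 - ν) * (Real.log a - Real.log b)^2 * max a b := by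
  set d := log b - log a
  have hf : ContinuousOn (fun t : ℝ ↦ a ^ (1 - t) * b ^ t) (Icc 0 1) :=
    fun x _ ↦ (hasDerivAt_rpow_one_sub_mul_rpow ha hb x).continuousAt.continuousWithinAt
  have hf' x (_ : x ∈ Ioo (0 : ℝ) 1) := hasDerivAt_rpow_one_sub_mul_rpow ha hb x
  have hf'' x (_ : x ∈ Ioo (0 : ℝ) 1) : HasDerivAt (fun t ↦ d * (a ^ (1 - t) * b ^ t))
      (d ^ 2 * (a ^ (1 - x) * b ^ x)) x :=
    ((hasDerivAt_rpow_one_sub_mul_rpow ha hb x).const_mul d).congr_deriv (by ring)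
  have hsq : (log a - log b) ^ 2 = d ^ 2 := sub_sq_comm _ _
  have lower := apply_le_chord_sub_of_le_deriv2 hf hf' hf'' (c := d ^ 2 * min a b)
    (fun x hx ↦ by gcongr; exact min_le_rpow_one_sub_mul_rpow ha hb (Ioo_subset_Icc_self hx)) hν
  have upper := chord_sub_le_apply_of_deriv2_le hf hf' hf'' (C := d ^ 2 * max a b)
    (fun x hx ↦ by gcongr; exact rpow_one_sub_mul_rpow_le_max ha hb (Ioo_subset_Icc_self hx)) hν
  simp only [sub_zero, sub_self, rpow_one, rpow_zero, mul_one, one_mul] at lower upper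
  rw [hsq]
  constructor <;> linarith
end

section
/- For all a, b > 0 and ν ∈ [0,1]: exp((1/2)·ν·(1−ν)·(b−a)²/max(a,b)²) ≤ ((1−ν)·a + ν·b)/(a^(1−ν)·b^ν) ≤ exp((1/2)·ν·(1−ν)·(b−a)²/min(a,b)²). -/
/-!
Taking logarithms, the middle quantity is the exponential of the Jensen gap
`log ((1 - ν) a + ν b) - ((1 - ν) log a + ν log b)`. On `[min a b, max a b]` the second derivative
of `-log` is `1 / t ^ 2`, which lies between `1 / max a b ^ 2` and `1 / min a b ^ 2`. Comparing
`-log` with the quadratics of these curvatures (strong convexity) bounds the gap below by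
`ν (1 - ν) (b - a) ^ 2 / (2 max a b ^ 2)` and above by `ν (1 - ν) (b - a) ^ 2 / (2 min a b ^ 2)`.
-/

open Set Real

theorem strongConvexOn_of_hasDerivWithinAt2_ge {D : Set ℝ} (hD : Convex ℝ D) {f f' f'' : ℝ → ℝ}
    {m : ℝ} (hf : ContinuousOn f D)
    (hf' : ∀ x ∈ interior D, HasDerivWithinAt f (f' x) (interior D) x)
    (hf'' : ∀ x ∈ interior D, HasDerivWithinAt f' (f'' x) (interior D) x)
    (hm : ∀ x ∈ interior D, m ≤ f'' x) : StrongConvexOn D m f := by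
  simp only [strongConvexOn_iff_convex, Real.norm_eq_abs, sq_abs]
  refine convexOn_of_hasDerivWithinAt2_nonneg hD (f' := fun x ↦ f' x - m * x)
    (f'' := fun x ↦ f'' x - m) (by fun_prop) (fun x hx ↦ ?_) (fun x hx ↦ ?_)
    (fun x hx ↦ sub_nonneg.2 (hm x hx))
  · exact ((hf' x hx).sub ((hasDerivAt_pow 2 x).hasDerivWithinAt.const_mul (m / 2))).congr_deriv
      (by push_cast; ring)
  · exact ((hf'' x hx).sub ((hasDerivWithinAt_id x _).const_mul m)).congr_deriv (by ring)

theorem StrongConvexOn.apply_convexCombo_le {s : Set ℝ} {m : ℝ} {f : ℝ → ℝ}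
    (hf : StrongConvexOn s m f) {x y : ℝ} (hx : x ∈ s) (hy : y ∈ s) {ν : ℝ} (hν₀ : 0 ≤ ν)
    (hν₁ : ν ≤ 1) :
    f ((1 - ν) * x + ν * y) ≤ (1 - ν) * f x + ν * f y - m / 2 * ν * (1 - ν) * (y - x) ^ 2 := by
  have := hf.2 hx hy (sub_nonneg.2 hν₁) hν₀ (sub_add_cancel 1 ν)
  simp only [smul_eq_mul, Real.norm_eq_abs, sq_abs] at this
  linear_combination this

theorem strongConvexOn_neg_log {x y : ℝ} (hx : 0 < x) :
    StrongConvexOn (Icc x y) (1 / y ^ 2) fun t ↦ -log t := by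
  have hpos : ∀ t ∈ interior (Icc x y), 0 < t := by
    rw [interior_Icc]; exact fun t ht ↦ hx.trans ht.1
  refine strongConvexOn_of_hasDerivWithinAt2_ge (convex_Icc x y) (f' := fun t ↦ -t⁻¹)
    (f'' := fun t ↦ (t ^ 2)⁻¹) ?_ (fun t ht ↦ ?_) (fun t ht ↦ ?_) (fun t ht ↦ ?_)
  · exact (continuousOn_log.mono fun t ht ↦ (hx.trans_le ht.1).ne').neg
  · exact (hasDerivAt_log (hpos t ht).ne').neg.hasDerivWithinAt
  · exact ((hasDerivAt_inv (hpos t ht).ne').neg.congr_deriv (neg_neg _)).hasDerivWithinAt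
  · have := hpos t ht
    rw [interior_Icc] at ht
    rw [one_div]
    gcongr
    exact ht.2.le

/-- With a negative modulus, strong convexity is the lower bound `-1 / x ^ 2 ≤ log''`. -/
theorem strongConvexOn_log {x y : ℝ} (hx : 0 < x) :
    StrongConvexOn (Icc x y) (-(1 / x ^ 2)) log := by
  have hpos : ∀ t ∈ interior (Icc x y), 0 < t := by
    rw [interior_Icc]; exact fun t ht ↦ hx.trans ht.1
  refine strongConvexOn_of_hasDerivWithinAt2_ge (convex_Icc x y) (f' := fun t ↦ t⁻¹)
    (f'' := fun t ↦ -(t ^ 2)⁻¹) ?_ (fun t ht ↦ ?_) (fun t ht ↦ ?_) (fun t ht ↦ ?_)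
  · exact continuousOn_log.mono fun t ht ↦ (hx.trans_le ht.1).ne'
  · exact (hasDerivAt_log (hpos t ht).ne').hasDerivWithinAt
  · exact (hasDerivAt_inv (hpos t ht).ne').hasDerivWithinAt
  · rw [one_div, neg_le_neg_iff]
    rw [interior_Icc] at ht
    gcongr
    exact ht.1.le

theorem stmt_3 (a b : ℝ) (ha : 0 < a) (hb : 0 < b) (ν : ℝ) (hν : ν ∈ Set.Icc (0:ℝ) 1) :
    Real.exp (1/2 * ν * (1 - ν) * (b - a)^2 / (max a b)^2)
      ≤ ((1 - ν) * a + ν * b) / (a ^ (1 - ν) * b ^ ν) ∧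
    ((1 - ν) * a + ν * b) / (a ^ (1 - ν) * b ^ ν)
      ≤ Real.exp (1/2 * ν * (1 - ν) * (b - a)^2 / (min a b)^2) := by
  have hmin : 0 < min a b := lt_min ha hb
  have haI : a ∈ Icc (min a b) (max a b) := ⟨min_le_left a b, le_max_left a b⟩
  have hbI : b ∈ Icc (min a b) (max a b) := ⟨min_le_right a b, le_max_right a b⟩
  have hA : 0 < (1 - ν) * a + ν * b :=
    hmin.trans_le (convex_Icc _ _ haI hbI (sub_nonneg.2 hν.2) hν.1 (sub_add_cancel 1 ν)).1
  have hG : a ^ (1 - ν) * b ^ ν = exp ((1 - ν) * log a + ν * log b) := by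
    rw [exp_add, rpow_def_of_pos ha, rpow_def_of_pos hb, mul_comm (log a), mul_comm (log b)]
  have hlower := (strongConvexOn_neg_log hmin).apply_convexCombo_le haI hbI hν.1 hν.2
  have hupper := (strongConvexOn_log (y := max a b) hmin).apply_convexCombo_le haI hbI hν.1 hν.2
  rw [hG, le_div_iff₀ (exp_pos _), div_le_iff₀ (exp_pos _), ← exp_add, ← exp_add,
    ← le_log_iff_exp_le hA, ← log_le_iff_le_exp hA]
  constructor
  · linear_combination hlower
  · linear_combination hupper
end

section
/- For all a, b > 0 and ν ∈ [0,1]: (1/2)·ν·(1−ν)·(b−a)²/max(a,b)² ≤ ln((1−ν)·a + ν·b) − (1−ν)·ln a − ν·ln b ≤ (1/2)·ν·(1−ν)·(b−a)²/min(a,b)². -/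
/-!
Since `log'' x = -1 / x²`, the function `log x + x² / (2 M²)` is concave on `(0, M]` and
`log x + x² / (2 m²)` is convex on `[m, ∞)`. Jensen's inequality for these at the two points `a`, `b`,
together with `(1 - ν) a² + ν b² - ((1 - ν) a + ν b)² = ν (1 - ν) (b - a)²`, gives the two bounds
with `M = max a b` and `m = min a b`.
-/

open Set Real

section JensenGap

variable {s : Set ℝ} {f : ℝ → ℝ} {c a b ν : ℝ}

lemma jensen_gap_le_of_convexOn_add_mul_sq (h : ConvexOn ℝ s fun x => f x + c * x ^ 2)
    (ha : a ∈ s) (hb : b ∈ s) (hν : ν ∈ Icc 0 1) :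
    f ((1 - ν) * a + ν * b) - (1 - ν) * f a - ν * f b ≤ c * ν * (1 - ν) * (b - a) ^ 2 := by
  have h' := h.2 ha hb (sub_nonneg.2 hν.2) hν.1 (sub_add_cancel 1 ν)
  simp only [smul_eq_mul] at h'
  linear_combination h'

lemma le_jensen_gap_of_concaveOn_add_mul_sq (h : ConcaveOn ℝ s fun x => f x + c * x ^ 2)
    (ha : a ∈ s) (hb : b ∈ s) (hν : ν ∈ Icc 0 1) :
    c * ν * (1 - ν) * (b - a) ^ 2 ≤ f ((1 - ν) * a + ν * b) - (1 - ν) * f a - ν * f b := by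
  have h' := h.2 ha hb (sub_nonneg.2 hν.2) hν.1 (sub_add_cancel 1 ν)
  simp only [smul_eq_mul] at h'
  linear_combination h'

end JensenGap

section LogAddMulSq

variable {D : Set ℝ} {c : ℝ}

lemma hasDerivAt_log_add_mul_sq {x : ℝ} (hx : x ≠ 0) :
    HasDerivAt (fun x => log x + c * x ^ 2) (x⁻¹ + 2 * c * x) x :=
  ((hasDerivAt_log hx).add ((hasDerivAt_pow 2 x).const_mul c)).congr_deriv (by push_cast; ring)

lemma hasDerivAt_inv_add_mul {x : ℝ} (hx : x ≠ 0) :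
    HasDerivAt (fun x => x⁻¹ + 2 * c * x) (-(x ^ 2)⁻¹ + 2 * c) x :=
  ((hasDerivAt_inv hx).add ((hasDerivAt_id x).const_mul (2 * c))).congr_deriv (by simp)

lemma convexOn_log_add_mul_sq (hD : Convex ℝ D) (hD₀ : D ⊆ Ioi 0)
    (hc : ∀ x ∈ D, 1 ≤ 2 * c * x ^ 2) : ConvexOn ℝ D fun x => log x + c * x ^ 2 := by
  have hne : ∀ x ∈ interior D, x ≠ 0 := fun x hx => (hD₀ (interior_subset hx)).ne'
  refine convexOn_of_hasDerivWithinAt2_nonneg hD ?_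
    (fun x hx => (hasDerivAt_log_add_mul_sq (hne x hx)).hasDerivWithinAt)
    (fun x hx => (hasDerivAt_inv_add_mul (hne x hx)).hasDerivWithinAt) fun x hx => ?_
  · exact (continuousOn_log.mono fun x hx => (hD₀ hx).ne').add (by fun_prop)
  · have hx₀ : 0 < x ^ 2 := pow_pos (hD₀ (interior_subset hx)) 2
    rw [neg_add_eq_sub, sub_nonneg, ← one_div, div_le_iff₀ hx₀]
    exact hc x (interior_subset hx)

lemma concaveOn_log_add_mul_sq (hD : Convex ℝ D) (hD₀ : D ⊆ Ioi 0)
    (hc : ∀ x ∈ D, 2 * c * x ^ 2 ≤ 1) : ConcaveOn ℝ D fun x => log x + c * x ^ 2 := by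
  have hne : ∀ x ∈ interior D, x ≠ 0 := fun x hx => (hD₀ (interior_subset hx)).ne'
  refine concaveOn_of_hasDerivWithinAt2_nonpos hD ?_
    (fun x hx => (hasDerivAt_log_add_mul_sq (hne x hx)).hasDerivWithinAt)
    (fun x hx => (hasDerivAt_inv_add_mul (hne x hx)).hasDerivWithinAt) fun x hx => ?_
  · exact (continuousOn_log.mono fun x hx => (hD₀ hx).ne').add (by fun_prop)
  · have hx₀ : 0 < x ^ 2 := pow_pos (hD₀ (interior_subset hx)) 2
    rw [neg_add_eq_sub, sub_nonpos, ← one_div, le_div_iff₀ hx₀]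
    exact hc x (interior_subset hx)

end LogAddMulSq

theorem stmt_4 (a b : ℝ) (ha : 0 < a) (hb : 0 < b) (ν : ℝ) (hν : ν ∈ Set.Icc (0:ℝ) 1) :
    1/2 * ν * (1 - ν) * (b - a)^2 / (max a b)^2
      ≤ Real.log ((1 - ν) * a + ν * b) - (1 - ν) * Real.log a - ν * Real.log b ∧
    Real.log ((1 - ν) * a + ν * b) - (1 - ν) * Real.log a - ν * Real.log b
      ≤ 1/2 * ν * (1 - ν) * (b - a)^2 / (min a b)^2 := by
  set M := max a b
  set m := min a b
  have hM : 0 < M := lt_max_of_lt_left ha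
  have hm : 0 < m := lt_min ha hb
  have hconcave : ConcaveOn ℝ (Ioc 0 M) fun x => log x + (2 * M ^ 2)⁻¹ * x ^ 2 :=
    concaveOn_log_add_mul_sq (convex_Ioc 0 M) Ioc_subset_Ioi_self fun x hx => by
      field_simp
      exact pow_le_pow_left₀ hx.1.le hx.2 2
  have hconvex : ConvexOn ℝ (Ici m) fun x => log x + (2 * m ^ 2)⁻¹ * x ^ 2 :=
    convexOn_log_add_mul_sq (convex_Ici m) (Ici_subset_Ioi.2 hm) fun x hx => by
      field_simp
      exact pow_le_pow_left₀ hm.le hx 2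
  constructor
  · calc _ = (2 * M ^ 2)⁻¹ * ν * (1 - ν) * (b - a) ^ 2 := by ring
      _ ≤ _ := le_jensen_gap_of_concaveOn_add_mul_sq hconcave ⟨ha, le_max_left a b⟩
          ⟨hb, le_max_right a b⟩ hν
  · calc _ ≤ (2 * m ^ 2)⁻¹ * ν * (1 - ν) * (b - a) ^ 2 :=
          jensen_gap_le_of_convexOn_add_mul_sq hconvex (min_le_left a b) (min_le_right a b) hν
      _ = _ := by ring
end

section
/- For all a, b > 0: (1/8)·(ln a − ln b)²·min(a,b) ≤ (a+b)/2 − √(a·b) ≤ (1/8)·(ln a − ln b)²·max(a,b). -/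
lemma aux_5 (x y : ℝ) (hy : 0 < y) (hxy : y ≤ x) :
    1/8 * (Real.log (x^2) - Real.log (y^2))^2 * y^2 ≤ (x^2 + y^2)/2 - x*y ∧
    (x^2 + y^2)/2 - x*y ≤ 1/8 * (Real.log (x^2) - Real.log (y^2))^2 * x^2 := by
  have hx : 0 < x := lt_of_lt_of_le hy hxy
  have hlx : Real.log (x^2) = 2 * Real.log x := by
    rw [sq, Real.log_mul hx.ne' hx.ne']; ring
  have hly : Real.log (y^2) = 2 * Real.log y := by
    rw [sq, Real.log_mul hy.ne' hy.ne']; ring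
  have hL0 : 0 ≤ Real.log x - Real.log y := sub_nonneg.2 (Real.log_le_log hy hxy)
  have h1 : (Real.log x - Real.log y) * y ≤ x - y := by
    have h := Real.log_le_sub_one_of_pos (div_pos hx hy)
    rw [Real.log_div hx.ne' hy.ne'] at h
    have h' := mul_le_mul_of_nonneg_right h hy.le
    have : (x / y - 1) * y = x - y := by field_simp
    linarith [this ▸ h']
  have h2 : x - y ≤ (Real.log x - Real.log y) * x := by
    have h := Real.log_le_sub_one_of_pos (div_pos hy hx)
    rw [Real.log_div hy.ne' hx.ne'] at h
    have h' := mul_le_mul_of_nonneg_right h hx.le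
    have : (y / x - 1) * x = y - x := by field_simp
    linarith [this ▸ h']
  have hxy0 : 0 ≤ x - y := sub_nonneg.2 hxy
  have hsq1 : ((Real.log x - Real.log y) * y)^2 ≤ (x - y)^2 :=
    pow_le_pow_left₀ (mul_nonneg hL0 hy.le) h1 2
  have hsq2 : (x - y)^2 ≤ ((Real.log x - Real.log y) * x)^2 :=
    pow_le_pow_left₀ hxy0 h2 2
  constructor <;> rw [hlx, hly] <;> nlinarith [hsq1, hsq2]

theorem stmt_5 (a b : ℝ) (ha : 0 < a) (hb : 0 < b) :
    1/8 * (Real.log a - Real.log b)^2 * min a b ≤ (a + b)/2 - Real.sqrt (a * b) ∧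
    (a + b)/2 - Real.sqrt (a * b) ≤ 1/8 * (Real.log a - Real.log b)^2 * max a b := by
  have hsab : Real.sqrt (a * b) = Real.sqrt a * Real.sqrt b := Real.sqrt_mul ha.le b
  have hsa : Real.sqrt a ^ 2 = a := Real.sq_sqrt ha.le
  have hsb : Real.sqrt b ^ 2 = b := Real.sq_sqrt hb.le
  have hsa0 : 0 < Real.sqrt a := Real.sqrt_pos.2 ha
  have hsb0 : 0 < Real.sqrt b := Real.sqrt_pos.2 hb
  rcases le_total b a with h | h
  · have hmin : min a b = b := min_eq_right h
    have hmax : max a b = a := max_eq_left h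
    have hxy : Real.sqrt b ≤ Real.sqrt a := Real.sqrt_le_sqrt h
    obtain ⟨h1, h2⟩ := aux_5 (Real.sqrt a) (Real.sqrt b) hsb0 hxy
    rw [hsa, hsb] at h1 h2
    rw [hmin, hmax, hsab]
    constructor <;> nlinarith [h1, h2]
  · have hmin : min a b = a := min_eq_left h
    have hmax : max a b = b := max_eq_right h
    have hxy : Real.sqrt a ≤ Real.sqrt b := Real.sqrt_le_sqrt h
    obtain ⟨h1, h2⟩ := aux_5 (Real.sqrt b) (Real.sqrt a) hsa0 hxy
    rw [hsa, hsb] at h1 h2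
    rw [hmin, hmax, hsab]
    constructor <;> nlinarith [h1, h2]
end

section
/- For all a, b > 0: exp((1/8)·(b−a)²/max(a,b)²) ≤ ((a+b)/2)/√(a·b) ≤ exp((1/8)·(b−a)²/min(a,b)²). -/
/-!
Write `a = x²`, `b = y²`, so that the ratio of the arithmetic to the geometric mean is
`M = (x² + y²) / (2xy)`, with `M - 1 = (y - x)² / (2xy)` and
`1 - M⁻¹ = (y - x)² / (x² + y²)`.
The elementary bounds `1 - M⁻¹ ≤ log M ≤ M - 1` reduce both inequalities to comparing these
with `(b - a)² / (8m²) = (y - x)² (x + y)² / (8m²)`, which is a polynomial inequality once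
`m ≤ min a b` (resp. `max a b ≤ m`).
-/

open Real

section SquareRoots

variable {x y m : ℝ}

theorem sq_add_sq_div_two_div_mul_le_exp (hx : 0 < x) (hy : 0 < y) (hm : 0 < m)
    (hmx : m ≤ x ^ 2) (hmy : m ≤ y ^ 2) :
    (x ^ 2 + y ^ 2) / 2 / (x * y) ≤ exp (1 / 8 * (y ^ 2 - x ^ 2) ^ 2 / m ^ 2) := by
  have hxy : 0 < x * y := mul_pos hx hy
  have hm_le_mul : m ≤ x * y := by nlinarith
  have hsub_one :
      (x ^ 2 + y ^ 2) / 2 / (x * y) - 1 = (y - x) ^ 2 * (1 / (2 * (x * y))) := by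
    field_simp; ring
  have hexponent :
      1 / 8 * (y ^ 2 - x ^ 2) ^ 2 / m ^ 2 = (y - x) ^ 2 * ((x + y) ^ 2 / (8 * m ^ 2)) := by
    field_simp; ring
  have hfactor : 1 / (2 * (x * y)) ≤ (x + y) ^ 2 / (8 * m ^ 2) := by
    rw [div_le_div_iff₀ (by positivity) (by positivity)]
    have hfour_m : 4 * m ≤ (x + y) ^ 2 := by nlinarith
    nlinarith [mul_le_mul hm_le_mul hfour_m (by positivity) hxy.le]
  calc (x ^ 2 + y ^ 2) / 2 / (x * y)
      ≤ exp ((x ^ 2 + y ^ 2) / 2 / (x * y) - 1) := by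
        linarith [add_one_le_exp ((x ^ 2 + y ^ 2) / 2 / (x * y) - 1)]
    _ ≤ exp (1 / 8 * (y ^ 2 - x ^ 2) ^ 2 / m ^ 2) := by
      rw [hsub_one, hexponent]
      exact exp_le_exp.mpr (mul_le_mul_of_nonneg_left hfactor (sq_nonneg _))

theorem exp_le_sq_add_sq_div_two_div_mul (hx : 0 < x) (hy : 0 < y)
    (hxm : x ^ 2 ≤ m) (hym : y ^ 2 ≤ m) :
    exp (1 / 8 * (y ^ 2 - x ^ 2) ^ 2 / m ^ 2) ≤ (x ^ 2 + y ^ 2) / 2 / (x * y) := by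
  have hm : 0 < m := lt_of_lt_of_le (by positivity) hxm
  have hratio : 0 < (x ^ 2 + y ^ 2) / 2 / (x * y) := by positivity
  have hone_sub_inv :
      1 - ((x ^ 2 + y ^ 2) / 2 / (x * y))⁻¹ = (y - x) ^ 2 * (1 / (x ^ 2 + y ^ 2)) := by
    field_simp; ring
  have hexponent :
      1 / 8 * (y ^ 2 - x ^ 2) ^ 2 / m ^ 2 = (y - x) ^ 2 * ((x + y) ^ 2 / (8 * m ^ 2)) := by
    field_simp; ring
  have hfactor : (x + y) ^ 2 / (8 * m ^ 2) ≤ 1 / (x ^ 2 + y ^ 2) := by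
    rw [div_le_div_iff₀ (by positivity) (by positivity)]
    nlinarith [mul_le_mul (show (x + y) ^ 2 ≤ 4 * m by nlinarith [sq_nonneg (x - y)])
      (show x ^ 2 + y ^ 2 ≤ 2 * m by linarith) (by positivity) (by positivity)]
  calc exp (1 / 8 * (y ^ 2 - x ^ 2) ^ 2 / m ^ 2)
      ≤ exp (log ((x ^ 2 + y ^ 2) / 2 / (x * y))) := by
        refine exp_le_exp.mpr (le_trans ?_ (one_sub_inv_le_log_of_pos hratio))
        rw [hexponent, hone_sub_inv]
        exact mul_le_mul_of_nonneg_left hfactor (sq_nonneg _)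
    _ = (x ^ 2 + y ^ 2) / 2 / (x * y) := exp_log hratio

end SquareRoots

theorem stmt_6 (a b : ℝ) (ha : 0 < a) (hb : 0 < b) :
    Real.exp (1/8 * (b - a)^2 / (max a b)^2) ≤ ((a + b)/2) / Real.sqrt (a * b) ∧
    ((a + b)/2) / Real.sqrt (a * b) ≤ Real.exp (1/8 * (b - a)^2 / (min a b)^2) := by
  obtain ⟨x, hx, rfl⟩ : ∃ x, 0 < x ∧ x ^ 2 = a := ⟨√a, sqrt_pos.mpr ha, sq_sqrt ha.le⟩
  obtain ⟨y, hy, rfl⟩ : ∃ y, 0 < y ∧ y ^ 2 = b := ⟨√b, sqrt_pos.mpr hb, sq_sqrt hb.le⟩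
  rw [← mul_pow, sqrt_sq (mul_pos hx hy).le]
  exact ⟨exp_le_sq_add_sq_div_two_div_mul hx hy (le_max_left _ _) (le_max_right _ _),
    sq_add_sq_div_two_div_mul_le_exp hx hy (lt_min ha hb) (min_le_left _ _) (min_le_right _ _)⟩
end

section
/- For all a, b > 0 and ν ∈ [0,1]: exp((1/2)·ν·(1−ν)·(1 − min(a,b)/max(a,b))²) ≤ ((1−ν)·a + ν·b)/(a^(1−ν)·b^ν) ≤ exp((1/2)·ν·(1−ν)·(max(a,b)/min(a,b) − 1)²). -/
/-! Let `φ(ν) = log((1-ν)a + νb) - ((1-ν) log a + ν log b)`, the logarithm of the middle ratio.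
It vanishes at `ν = 0, 1` and `φ''(ν) = -((b-a)/x)²` with `x = (1-ν)a + νb ∈ [min a b, max a b]`,
so `-(max/min - 1)² ≤ φ'' ≤ -(1 - min/max)²`. A function on `[0,1]` vanishing at both ends with
`φ'' ≤ -k` (resp. `≥ -k`) lies above (resp. below) the parabola `k/2 · ν(1-ν)`, by concavity
(resp. convexity) of the difference. -/

open Real Set

theorem mul_mul_one_sub_le_of_deriv2_le {f f' f'' : ℝ → ℝ} {k : ℝ}
    (hf : ContinuousOn f (Icc 0 1)) (hf' : ∀ x ∈ Ioo 0 1, HasDerivAt f (f' x) x)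
    (hf'' : ∀ x ∈ Ioo 0 1, HasDerivAt f' (f'' x) x) (hk : ∀ x ∈ Ioo 0 1, f'' x ≤ -k)
    (h0 : f 0 = 0) (h1 : f 1 = 0) {ν : ℝ} (hν : ν ∈ Icc 0 1) :
    k / 2 * ν * (1 - ν) ≤ f ν := by
  set g : ℝ → ℝ := fun x ↦ f x - k / 2 * x * (1 - x)
  have hg : ConcaveOn ℝ (Icc 0 1) g := by
    refine concaveOn_of_hasDerivWithinAt2_nonpos (convex_Icc 0 1)
      (f' := fun x ↦ f' x - k / 2 * (1 - 2 * x)) (f'' := fun x ↦ f'' x + k)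
      (hf.sub (by fun_prop)) (fun x hx ↦ ?_) (fun x hx ↦ ?_) (fun x hx ↦ ?_)
    all_goals simp only [interior_Icc] at hx ⊢
    · exact ((hf' x hx).sub ((((hasDerivAt_id x).const_mul (k / 2)).mul
        ((hasDerivAt_id x).const_sub 1)).congr_deriv (by simp; ring))).hasDerivWithinAt
    · have hq : HasDerivAt (fun y ↦ k / 2 * (1 - 2 * y)) (-k) x :=
        ((((hasDerivAt_id x).const_mul 2).const_sub 1).const_mul (k / 2)).congr_deriv (by simp)
      exact ((hf'' x hx).sub hq).congr_deriv (sub_neg_eq_add _ _) |>.hasDerivWithinAt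
    · linarith [hk x hx]
  simpa [g, h0, h1] using hg.ge_on_segment' (left_mem_Icc.2 zero_le_one)
    (right_mem_Icc.2 zero_le_one) (sub_nonneg.2 hν.2) hν.1 (sub_add_cancel 1 ν)

theorem le_mul_mul_one_sub_of_le_deriv2 {f f' f'' : ℝ → ℝ} {k : ℝ}
    (hf : ContinuousOn f (Icc 0 1)) (hf' : ∀ x ∈ Ioo 0 1, HasDerivAt f (f' x) x)
    (hf'' : ∀ x ∈ Ioo 0 1, HasDerivAt f' (f'' x) x) (hk : ∀ x ∈ Ioo 0 1, -k ≤ f'' x)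
    (h0 : f 0 = 0) (h1 : f 1 = 0) {ν : ℝ} (hν : ν ∈ Icc 0 1) :
    f ν ≤ k / 2 * ν * (1 - ν) := by
  have := mul_mul_one_sub_le_of_deriv2_le (f := -f) (f' := -f') (f'' := -f'') (k := -k) hf.neg
    (fun x hx ↦ (hf' x hx).neg) (fun x hx ↦ (hf'' x hx).neg) (fun x hx ↦ neg_le_neg (hk x hx))
    (by simp [h0]) (by simp [h1]) hν
  simp only [Pi.neg_apply] at this
  linarith

noncomputable def logWeightedAMGMRatio (a b ν : ℝ) : ℝ :=
  log ((1 - ν) * a + ν * b) - ((1 - ν) * log a + ν * log b)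

theorem hasDerivAt_one_sub_mul_add_mul (x y ν : ℝ) :
    HasDerivAt (fun ν ↦ (1 - ν) * x + ν * y) (y - x) ν :=
  ((((hasDerivAt_id ν).const_sub 1).mul_const x).fun_add
    ((hasDerivAt_id ν).mul_const y)).congr_deriv (by simp; ring)

section
variable {a b : ℝ}

@[simp]
theorem logWeightedAMGMRatio_zero : logWeightedAMGMRatio a b 0 = 0 := by
  simp [logWeightedAMGMRatio]

@[simp]
theorem logWeightedAMGMRatio_one : logWeightedAMGMRatio a b 1 = 0 := by
  simp [logWeightedAMGMRatio]

theorem weightedMean_mem_Icc_min_max {ν : ℝ} (hν : ν ∈ Icc (0 : ℝ) 1) :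
    (1 - ν) * a + ν * b ∈ Icc (min a b) (max a b) := by
  have : (1 - ν) • a + ν • b ∈ segment ℝ a b := ⟨1 - ν, ν, by linarith [hν.2], hν.1, by ring, rfl⟩
  rwa [segment_eq_uIcc] at this

theorem weightedMean_pos (ha : 0 < a) (hb : 0 < b) {ν : ℝ} (hν : ν ∈ Icc (0 : ℝ) 1) :
    0 < (1 - ν) * a + ν * b :=
  (lt_min ha hb).trans_le (weightedMean_mem_Icc_min_max hν).1

theorem weightedMean_div_weightedGeomMean_eq_exp (ha : 0 < a) (hb : 0 < b) {ν : ℝ}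
    (hν : ν ∈ Icc (0 : ℝ) 1) :
    ((1 - ν) * a + ν * b) / (a ^ (1 - ν) * b ^ ν) = exp (logWeightedAMGMRatio a b ν) := by
  rw [logWeightedAMGMRatio, exp_sub, exp_log (weightedMean_pos ha hb hν), exp_add,
    rpow_def_of_pos ha, rpow_def_of_pos hb, mul_comm (log a), mul_comm (log b)]

theorem hasDerivAt_logWeightedAMGMRatio {ν : ℝ} (hν : 0 < (1 - ν) * a + ν * b) :
    HasDerivAt (logWeightedAMGMRatio a b)
      ((b - a) / ((1 - ν) * a + ν * b) - (log b - log a)) ν :=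
  ((hasDerivAt_one_sub_mul_add_mul a b ν).log hν.ne').sub
    (hasDerivAt_one_sub_mul_add_mul (log a) (log b) ν)

theorem hasDerivAt_deriv_logWeightedAMGMRatio {ν : ℝ} (hν : 0 < (1 - ν) * a + ν * b) :
    HasDerivAt (fun ν ↦ (b - a) / ((1 - ν) * a + ν * b) - (log b - log a))
      (-((b - a) / ((1 - ν) * a + ν * b)) ^ 2) ν := by
  refine (((hasDerivAt_const ν (b - a)).div (hasDerivAt_one_sub_mul_add_mul a b ν)
    hν.ne').sub_const _).congr_deriv ?_
  field_simp
  ring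

theorem sq_one_sub_min_div_max_le (ha : 0 < a) (hb : 0 < b) {x : ℝ}
    (hx : x ∈ Icc (min a b) (max a b)) :
    (1 - min a b / max a b) ^ 2 ≤ ((b - a) / x) ^ 2 ∧
      ((b - a) / x) ^ 2 ≤ (max a b / min a b - 1) ^ 2 := by
  have hmin : 0 < min a b := lt_min ha hb
  have hmax : 0 < max a b := hmin.trans_le min_le_max
  have hspread : 0 ≤ max a b - min a b := sub_nonneg.2 min_le_max
  have hsq : ((b - a) / x) ^ 2 = ((max a b - min a b) / x) ^ 2 := by
    rw [div_pow, div_pow, max_sub_min_eq_abs, sq_abs]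
  rw [hsq, one_sub_div hmax.ne', div_sub_one hmin.ne']
  have hx0 : 0 < x := hmin.trans_le hx.1
  exact ⟨pow_le_pow_left₀ (by positivity) (div_le_div_of_nonneg_left hspread hx0 hx.2) 2,
    pow_le_pow_left₀ (by positivity) (div_le_div_of_nonneg_left hspread hmin hx.1) 2⟩

end

theorem stmt_8 (a b : ℝ) (ha : 0 < a) (hb : 0 < b) (ν : ℝ) (hν : ν ∈ Set.Icc (0:ℝ) 1) :
    Real.exp (1/2 * ν * (1 - ν) * (1 - min a b / max a b)^2)
      ≤ ((1 - ν) * a + ν * b) / (a ^ (1 - ν) * b ^ ν) ∧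
    ((1 - ν) * a + ν * b) / (a ^ (1 - ν) * b ^ ν)
      ≤ Real.exp (1/2 * ν * (1 - ν) * (max a b / min a b - 1)^2) := by
  have hpos (x : ℝ) (hx : x ∈ Ioo (0 : ℝ) 1) := weightedMean_pos ha hb (Ioo_subset_Icc_self hx)
  have hcont : ContinuousOn (logWeightedAMGMRatio a b) (Icc 0 1) := fun x hx ↦
    (hasDerivAt_logWeightedAMGMRatio (weightedMean_pos ha hb hx)).continuousAt.continuousWithinAt
  have h' (x : ℝ) (hx : x ∈ Ioo (0 : ℝ) 1) := hasDerivAt_logWeightedAMGMRatio (hpos x hx)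
  have h'' (x : ℝ) (hx : x ∈ Ioo (0 : ℝ) 1) := hasDerivAt_deriv_logWeightedAMGMRatio (hpos x hx)
  have hbounds (x : ℝ) (hx : x ∈ Ioo (0 : ℝ) 1) :=
    sq_one_sub_min_div_max_le ha hb (weightedMean_mem_Icc_min_max (Ioo_subset_Icc_self hx))
  have hlower := mul_mul_one_sub_le_of_deriv2_le hcont h' h''
    (fun x hx ↦ neg_le_neg (hbounds x hx).1) logWeightedAMGMRatio_zero logWeightedAMGMRatio_one hν
  have hupper := le_mul_mul_one_sub_of_le_deriv2 hcont h' h''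
    (fun x hx ↦ neg_le_neg (hbounds x hx).2) logWeightedAMGMRatio_zero logWeightedAMGMRatio_one hν
  rw [weightedMean_div_weightedGeomMean_eq_exp ha hb hν, exp_le_exp, exp_le_exp]
  constructor <;> linarith
end

section
/- For all x > 0 and ν ∈ [0,1]: (1/4)·ν·(1−ν)·(x + 1 − |x−1|)·(ln x)² ≤ 1 − ν + ν·x − x^ν ≤ (1/4)·ν·(1−ν)·(x + 1 + |x−1|)·(ln x)². -/
/-!
Put `f t = 1 - t + t x - x ^ t`, the gap in the weighted AM–GM inequality. Then `f 0 = f 1 = 0`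
and `f'' t = -(log x)² x ^ t`, where `x ^ t` lies between `min x 1` and `max x 1` for
`t ∈ [0, 1]`. A function vanishing at `0` and `1` whose second derivative is at most `-2c` on
`(0, 1)` dominates `c t (1 - t)` there, since the difference is concave; the upper bound is
symmetric.
-/

open Set Real

theorem mul_mul_one_sub_le_of_hasDerivAt2_le {f f' f'' : ℝ → ℝ} {c ν : ℝ}
    (hf : ∀ t, HasDerivAt f (f' t) t) (hf' : ∀ t, HasDerivAt f' (f'' t) t)
    (h₀ : f 0 = 0) (h₁ : f 1 = 0) (hf'' : ∀ t ∈ Ioo (0 : ℝ) 1, f'' t ≤ -2 * c)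
    (hν : ν ∈ Icc (0 : ℝ) 1) : c * ν * (1 - ν) ≤ f ν := by
  set g : ℝ → ℝ := fun t ↦ f t - c * t * (1 - t)
  have hg : ∀ t, HasDerivAt g (f' t - c * (1 - 2 * t)) t := fun t ↦ by
    refine ((hf t).sub (((hasDerivAt_id' t).const_mul c).mul
      ((hasDerivAt_id' t).const_sub 1))).congr_deriv ?_
    ring
  have hg' : ∀ t, HasDerivAt (fun t ↦ f' t - c * (1 - 2 * t)) (f'' t + 2 * c) t := fun t ↦ by
    refine ((hf' t).sub
      ((((hasDerivAt_id' t).const_mul 2).const_sub 1).const_mul c)).congr_deriv ?_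
    ring
  have hconcave : ConcaveOn ℝ (Icc 0 1) g := by
    refine concaveOn_of_hasDerivWithinAt2_nonpos (convex_Icc 0 1)
      (fun t _ ↦ (hg t).continuousAt.continuousWithinAt) (fun t _ ↦ (hg t).hasDerivWithinAt)
      (fun t _ ↦ (hg' t).hasDerivWithinAt) fun t ht ↦ ?_
    rw [interior_Icc] at ht
    linarith [hf'' t ht]
  have hgν : 0 ≤ g ν := by
    simpa [g, h₀, h₁] using
      hconcave.min_le_of_mem_Icc (left_mem_Icc.2 zero_le_one) (right_mem_Icc.2 zero_le_one) hν
  exact sub_nonneg.1 hgν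

theorem le_mul_mul_one_sub_of_le_hasDerivAt2 {f f' f'' : ℝ → ℝ} {c ν : ℝ}
    (hf : ∀ t, HasDerivAt f (f' t) t) (hf' : ∀ t, HasDerivAt f' (f'' t) t)
    (h₀ : f 0 = 0) (h₁ : f 1 = 0) (hf'' : ∀ t ∈ Ioo (0 : ℝ) 1, -2 * c ≤ f'' t)
    (hν : ν ∈ Icc (0 : ℝ) 1) : f ν ≤ c * ν * (1 - ν) := by
  have := mul_mul_one_sub_le_of_hasDerivAt2_le (f := -f) (c := -c) (fun t ↦ (hf t).neg)
    (fun t ↦ (hf' t).neg) (by simp [h₀]) (by simp [h₁])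
    (fun t ht ↦ by linarith [hf'' t ht]) hν
  simp only [Pi.neg_apply] at this
  linarith

theorem Real.rpow_mem_Icc_min_max {x t : ℝ} (hx : 0 < x) (ht : t ∈ Icc (0 : ℝ) 1) :
    x ^ t ∈ Icc (min x 1) (max x 1) := by
  obtain ⟨ht₀, ht₁⟩ := ht
  rcases le_total 1 x with h | h
  · rw [min_eq_right h, max_eq_left h]
    exact ⟨one_le_rpow h ht₀, by simpa using rpow_le_rpow_of_exponent_le h ht₁⟩
  · rw [min_eq_left h, max_eq_right h]
    exact ⟨by simpa using rpow_le_rpow_of_exponent_ge hx h ht₁, rpow_le_one hx.le h ht₀⟩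

theorem hasDerivAt_one_sub_add_mul_sub_rpow {x : ℝ} (hx : 0 < x) (t : ℝ) :
    HasDerivAt (fun t ↦ 1 - t + t * x - x ^ t) (x - 1 - x ^ t * log x) t := by
  refine ((((hasDerivAt_id' t).const_sub 1).add ((hasDerivAt_id' t).mul_const x)).sub
    (hasStrictDerivAt_const_rpow hx t).hasDerivAt).congr_deriv ?_
  ring

theorem hasDerivAt_sub_sub_rpow_mul_log {x : ℝ} (hx : 0 < x) (t : ℝ) :
    HasDerivAt (fun t ↦ x - 1 - x ^ t * log x) (-(x ^ t * log x ^ 2)) t := by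
  refine (((hasStrictDerivAt_const_rpow hx t).hasDerivAt.mul_const (log x)).const_sub
    (x - 1)).congr_deriv ?_
  ring

theorem stmt_9 (x : ℝ) (hx : 0 < x) (ν : ℝ) (hν : ν ∈ Set.Icc (0:ℝ) 1) :
    1/4 * ν * (1 - ν) * (x + 1 - |x - 1|) * (Real.log x)^2 ≤ 1 - ν + ν * x - x ^ ν ∧
    1 - ν + ν * x - x ^ ν ≤ 1/4 * ν * (1 - ν) * (x + 1 + |x - 1|) * (Real.log x)^2 := by
  have hmin : x + 1 - |x - 1| = 2 * min x 1 := by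
    linarith [min_add_max x 1, max_sub_min_eq_abs' x 1]
  have hmax : x + 1 + |x - 1| = 2 * max x 1 := by
    linarith [min_add_max x 1, max_sub_min_eq_abs' x 1]
  have hL := sq_nonneg (log x)
  have hbounds : ∀ t ∈ Ioo (0 : ℝ) 1, x ^ t ∈ Icc (min x 1) (max x 1) :=
    fun t ht ↦ rpow_mem_Icc_min_max hx (Ioo_subset_Icc_self ht)
  constructor
  · have := mul_mul_one_sub_le_of_hasDerivAt2_le (c := min x 1 * log x ^ 2 / 2)
      (hasDerivAt_one_sub_add_mul_sub_rpow hx) (hasDerivAt_sub_sub_rpow_mul_log hx)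
      (by simp) (by simp) (fun t ht ↦ by nlinarith [(hbounds t ht).1]) hν
    rw [hmin]
    linear_combination this
  · have := le_mul_mul_one_sub_of_le_hasDerivAt2 (c := max x 1 * log x ^ 2 / 2)
      (hasDerivAt_one_sub_add_mul_sub_rpow hx) (hasDerivAt_sub_sub_rpow_mul_log hx)
      (by simp) (by simp) (fun t ht ↦ by nlinarith [(hbounds t ht).2]) hν
    rw [hmax]
    linear_combination this
end

section
/- For all x > 0 and ν ∈ [0,1]: exp((1/2)·ν·(1−ν)·(1 − min(1,x)/max(1,x))²)·x^ν ≤ 1 − ν + ν·x ≤ exp((1/2)·ν·(1−ν)·(max(1,x)/min(1,x) − 1)²)·x^ν. -/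
/-!
Write `x ^ ν = exp (ν log x)`; the claim becomes a two-sided bound on
`G x = log (1 - ν + ν x) - ν log x` with `G 1 = 0` and `G' x = ν (1 - ν) (x - 1) / (x (1 - ν + ν x))`.
Subtracting `ν (1 - ν) / 2 · (1 - 1/x)²` from `G` leaves a function with derivative
`ν (1 - ν) (x - 1)² (x + 1 - ν) / (x³ (1 - ν + ν x)) ≥ 0`, and subtracting `ν (1 - ν) / 2 · (x - 1)²`
leaves one with derivative `-ν (1 - ν) (x - 1)² (1 + ν x) / (x (1 - ν + ν x)) ≤ 0`.
Both differences vanish at `1`, so comparing with their value at `1` on either side of `1`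
gives the four inequalities.
-/

open Real Set

noncomputable def amGmLogGap (ν x : ℝ) : ℝ := log (1 - ν + ν * x) - ν * log x

@[simp]
lemma amGmLogGap_one (ν : ℝ) : amGmLogGap ν 1 = 0 := by
  simp [amGmLogGap]

lemma hasDerivAt_amGmLogGap {ν x : ℝ} (hx : x ≠ 0) (hD : 1 - ν + ν * x ≠ 0) :
    HasDerivAt (amGmLogGap ν) (ν * (1 - ν) * (x - 1) / (x * (1 - ν + ν * x))) x := by
  have hlin : HasDerivAt (fun y : ℝ => 1 - ν + ν * y) ν x := by
    simpa using ((hasDerivAt_id x).const_mul ν).const_add (1 - ν)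
  refine ((hlin.log hD).sub ((hasDerivAt_log hx).const_mul ν)).congr_deriv ?_
  field_simp
  ring

section

variable {ν : ℝ} (h0 : 0 ≤ ν) (h1 : ν ≤ 1)
include h0 h1

lemma one_sub_add_mul_pos {x : ℝ} (hx : 0 < x) : 0 < 1 - ν + ν * x := by
  rcases h1.lt_or_eq with h1 | rfl
  · nlinarith [mul_nonneg h0 hx.le]
  · simpa using hx

lemma monotoneOn_amGmLogGap_sub_sq_one_sub_inv :
    MonotoneOn (fun x => amGmLogGap ν x - 1 / 2 * ν * (1 - ν) * (1 - x⁻¹) ^ 2) (Ioi 0) := by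
  have hderiv : ∀ x ∈ Ioi (0 : ℝ), HasDerivAt
      (fun x => amGmLogGap ν x - 1 / 2 * ν * (1 - ν) * (1 - x⁻¹) ^ 2)
      (ν * (1 - ν) * (x - 1) ^ 2 * (x + 1 - ν) / (x ^ 3 * (1 - ν + ν * x))) x := by
    intro x (hx : 0 < x)
    have hD := one_sub_add_mul_pos h0 h1 hx
    refine ((hasDerivAt_amGmLogGap hx.ne' hD.ne').sub
      ((((hasDerivAt_inv hx.ne').const_sub 1).pow 2).const_mul _)).congr_deriv ?_
    rw [Nat.add_one_sub_one, pow_one]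
    field_simp
    ring
  refine monotoneOn_of_hasDerivWithinAt_nonneg (convex_Ioi 0)
    (fun x hx => (hderiv x hx).continuousAt.continuousWithinAt)
    (fun x hx => (hderiv x (interior_subset hx)).hasDerivWithinAt) ?_
  rw [interior_Ioi]
  intro x (hx : 0 < x)
  have := one_sub_add_mul_pos h0 h1 hx
  have : 0 ≤ 1 - ν := by linarith
  have : 0 ≤ x + 1 - ν := by linarith
  positivity

lemma antitoneOn_amGmLogGap_sub_sq_sub_one :
    AntitoneOn (fun x => amGmLogGap ν x - 1 / 2 * ν * (1 - ν) * (x - 1) ^ 2) (Ioi 0) := by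
  have hderiv : ∀ x ∈ Ioi (0 : ℝ), HasDerivAt
      (fun x => amGmLogGap ν x - 1 / 2 * ν * (1 - ν) * (x - 1) ^ 2)
      (-(ν * (1 - ν) * (x - 1) ^ 2 * (1 + ν * x) / (x * (1 - ν + ν * x)))) x := by
    intro x (hx : 0 < x)
    have hD := one_sub_add_mul_pos h0 h1 hx
    refine ((hasDerivAt_amGmLogGap hx.ne' hD.ne').sub
      ((((hasDerivAt_id' x).sub_const 1).pow 2).const_mul _)).congr_deriv ?_
    rw [Nat.add_one_sub_one, pow_one]
    field_simp
    ring
  refine antitoneOn_of_hasDerivWithinAt_nonpos (convex_Ioi 0)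
    (fun x hx => (hderiv x hx).continuousAt.continuousWithinAt)
    (fun x hx => (hderiv x (interior_subset hx)).hasDerivWithinAt) ?_
  rw [interior_Ioi]
  intro x (hx : 0 < x)
  have := one_sub_add_mul_pos h0 h1 hx
  have : 0 ≤ 1 - ν := by linarith
  rw [neg_nonpos]
  positivity

lemma amGmLogGap_mem_Icc {x : ℝ} (hx : 0 < x) :
    amGmLogGap ν x ∈ Icc (1 / 2 * ν * (1 - ν) * (1 - min 1 x / max 1 x) ^ 2)
      (1 / 2 * ν * (1 - ν) * (max 1 x / min 1 x - 1) ^ 2) := by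
  have hmono := monotoneOn_amGmLogGap_sub_sq_one_sub_inv h0 h1
  have hanti := antitoneOn_amGmLogGap_sub_sq_sub_one h0 h1
  have one_mem : (1 : ℝ) ∈ Ioi 0 := mem_Ioi.2 one_pos
  rcases le_total 1 x with hx1 | hx1
  · have hlow := hmono one_mem hx hx1
    have hup := hanti one_mem hx hx1
    simp only [amGmLogGap_one, inv_one] at hlow hup
    rw [min_eq_left hx1, max_eq_right hx1, one_div x, div_one]
    constructor <;> linarith
  · have hlow := hanti hx one_mem hx1
    have hup := hmono hx one_mem hx1
    simp only [amGmLogGap_one, inv_one] at hlow hup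
    rw [min_eq_right hx1, max_eq_left hx1, div_one, one_div x, ← neg_sub x 1, neg_sq,
      ← neg_sub 1 x⁻¹, neg_sq]
    constructor <;> linarith

end

theorem stmt_10 (x : ℝ) (hx : 0 < x) (ν : ℝ) (hν : ν ∈ Set.Icc (0:ℝ) 1) :
    Real.exp (1/2 * ν * (1 - ν) * (1 - min 1 x / max 1 x)^2) * x ^ ν ≤ 1 - ν + ν * x ∧
    1 - ν + ν * x ≤ Real.exp (1/2 * ν * (1 - ν) * (max 1 x / min 1 x - 1)^2) * x ^ ν := by
  obtain ⟨h0, h1⟩ := hν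
  obtain ⟨hlow, hup⟩ := amGmLogGap_mem_Icc h0 h1 hx
  rw [amGmLogGap] at hlow hup
  rw [rpow_def_of_pos hx, ← exp_add, ← exp_add, ← exp_log (one_sub_add_mul_pos h0 h1 hx),
    exp_le_exp, exp_le_exp]
  constructor <;> linarith
end

section
/- Let 0 < k ≤ K and ν ∈ [0,1]. For all x ∈ [k,K]: exp((1/2)·ν·(1−ν)·(1 − min(1,K)/max(1,k))²)·x^ν ≤ 1 − ν + ν·x ≤ exp((1/2)·ν·(1−ν)·(max(1,K)/min(1,k) − 1)²)·x^ν. -/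
/-!
The function `y ↦ log y + y ^ 2 / (2 * c ^ 2)` has second derivative `1 / c ^ 2 - 1 / y ^ 2`, so it
is convex on `[c, ∞)` and concave on `(0, c]`. Jensen's inequality for it at the points `1` and `x`
with weights `1 - ν` and `ν` traps `log (1 - ν + ν * x) - ν * log x` between
`ν * (1 - ν) * ((x - 1) / c) ^ 2 / 2` for `c = max 1 x` and for `c = min 1 x`. Finally
`|x - 1| = max 1 x - min 1 x`, and these extremes are controlled by `k` and `K`.
-/

open Real Set

section LogPlusQuadratic

variable {c y : ℝ}

lemma hasDerivAt_log_add_sq_div (hc : c ≠ 0) (hy : 0 < y) :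
    HasDerivAt (fun y ↦ log y + y ^ 2 / (2 * c ^ 2)) (y⁻¹ + y / c ^ 2) y := by
  refine ((hasDerivAt_log hy.ne').add ((hasDerivAt_pow 2 y).div_const (2 * c ^ 2))).congr_deriv ?_
  field_simp
  ring

lemma hasDerivAt_inv_add_div_sq (hy : 0 < y) :
    HasDerivAt (fun y ↦ y⁻¹ + y / c ^ 2) (-(y ^ 2)⁻¹ + 1 / c ^ 2) y :=
  (hasDerivAt_inv hy.ne').add ((hasDerivAt_id y).div_const (c ^ 2))

lemma convexOn_log_add_sq_div (hc : 0 < c) :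
    ConvexOn ℝ (Ici c) (fun y ↦ log y + y ^ 2 / (2 * c ^ 2)) := by
  refine convexOn_of_hasDerivWithinAt2_nonneg (convex_Ici c)
    (f' := fun y ↦ y⁻¹ + y / c ^ 2) (f'' := fun y ↦ -(y ^ 2)⁻¹ + 1 / c ^ 2) ?_ ?_ ?_ ?_
  · exact (continuousOn_log.mono fun y hy ↦ (hc.trans_le hy).ne').add (by fun_prop)
  all_goals
    rw [interior_Ici]
    intro y (hy : c < y)
  · exact (hasDerivAt_log_add_sq_div hc.ne' (hc.trans hy)).hasDerivWithinAt
  · exact (hasDerivAt_inv_add_div_sq (hc.trans hy)).hasDerivWithinAt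
  · rw [one_div, neg_add_eq_sub, sub_nonneg]
    exact inv_anti₀ (by positivity) (pow_le_pow_left₀ hc.le hy.le 2)

lemma concaveOn_log_add_sq_div (hc : 0 < c) :
    ConcaveOn ℝ (Ioc 0 c) (fun y ↦ log y + y ^ 2 / (2 * c ^ 2)) := by
  refine concaveOn_of_hasDerivWithinAt2_nonpos (convex_Ioc 0 c)
    (f' := fun y ↦ y⁻¹ + y / c ^ 2) (f'' := fun y ↦ -(y ^ 2)⁻¹ + 1 / c ^ 2) ?_ ?_ ?_ ?_
  · exact (continuousOn_log.mono fun y hy ↦ hy.1.ne').add (by fun_prop)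
  all_goals
    rw [interior_Ioc]
    rintro y ⟨hy0, hyc⟩
  · exact (hasDerivAt_log_add_sq_div hc.ne' hy0).hasDerivWithinAt
  · exact (hasDerivAt_inv_add_div_sq hy0).hasDerivWithinAt
  · rw [one_div, neg_add_eq_sub, sub_nonpos]
    exact inv_anti₀ (by positivity) (pow_le_pow_left₀ hy0.le hyc.le 2)

end LogPlusQuadratic

section WeightedMeanOfLog

lemma convexComb_sq_div_sub (c p q ν : ℝ) :
    (1 - ν) * (p ^ 2 / (2 * c ^ 2)) + ν * (q ^ 2 / (2 * c ^ 2)) -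
      ((1 - ν) * p + ν * q) ^ 2 / (2 * c ^ 2) = 1 / 2 * ν * (1 - ν) * ((q - p) / c) ^ 2 := by
  ring

variable {c p q ν : ℝ}

lemma log_convexComb_sub_le (hc : 0 < c) (hp : c ≤ p) (hq : c ≤ q) (hν₀ : 0 ≤ ν) (hν₁ : ν ≤ 1) :
    log ((1 - ν) * p + ν * q) - ((1 - ν) * log p + ν * log q) ≤
      1 / 2 * ν * (1 - ν) * ((q - p) / c) ^ 2 := by
  have h := (convexOn_log_add_sq_div hc).2 (mem_Ici.2 hp) (mem_Ici.2 hq)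
    (sub_nonneg.2 hν₁) hν₀ (sub_add_cancel 1 ν)
  simp only [smul_eq_mul] at h
  linarith [convexComb_sq_div_sub c p q ν]

lemma le_log_convexComb_sub (hc : 0 < c) (hp : p ∈ Ioc 0 c) (hq : q ∈ Ioc 0 c)
    (hν₀ : 0 ≤ ν) (hν₁ : ν ≤ 1) :
    1 / 2 * ν * (1 - ν) * ((q - p) / c) ^ 2 ≤
      log ((1 - ν) * p + ν * q) - ((1 - ν) * log p + ν * log q) := by
  have h := (concaveOn_log_add_sq_div hc).2 hp hq (sub_nonneg.2 hν₁) hν₀ (sub_add_cancel 1 ν)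
  simp only [smul_eq_mul] at h
  linarith [convexComb_sq_div_sub c p q ν]

end WeightedMeanOfLog

section ExpMulRpow

variable {c ν x y : ℝ}

lemma exp_mul_rpow_le_iff (hx : 0 < x) (hy : 0 < y) :
    exp c * x ^ ν ≤ y ↔ c ≤ log y - ν * log x := by
  rw [rpow_def_of_pos hx, ← exp_add, le_sub_iff_add_le, le_log_iff_exp_le hy, mul_comm ν]

lemma le_exp_mul_rpow_iff (hx : 0 < x) (hy : 0 < y) :
    y ≤ exp c * x ^ ν ↔ log y - ν * log x ≤ c := by
  rw [rpow_def_of_pos hx, ← exp_add, sub_le_iff_le_add, log_le_iff_le_exp hy, mul_comm ν]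

end ExpMulRpow

section Ratios

variable {k K x : ℝ}

lemma one_sub_min_div_max_sq_le (hk : 0 < k) (hkx : k ≤ x) (hxK : x ≤ K) :
    (1 - min 1 K / max 1 k) ^ 2 ≤ ((x - 1) / max 1 x) ^ 2 := by
  have hM : 0 < max 1 x := lt_max_of_lt_left one_pos
  have hK : 0 < K := by linarith
  have hratio : min 1 K / max 1 k ≤ 1 :=
    div_le_one_of_le₀ ((min_le_left _ _).trans (le_max_left _ _)) (by positivity)
  rw [← sq_abs ((x - 1) / _), abs_div, abs_of_pos hM, abs_sub_comm, ← max_sub_min_eq_abs', sub_div,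
    div_self hM.ne']
  gcongr

lemma sq_le_max_div_min_sub_one_sq (hk : 0 < k) (hkx : k ≤ x) (hxK : x ≤ K) :
    ((x - 1) / min 1 x) ^ 2 ≤ (max 1 K / min 1 k - 1) ^ 2 := by
  have hm : 0 < min 1 x := lt_min one_pos (hk.trans_le hkx)
  have hratio : 1 ≤ max 1 x / min 1 x := (one_le_div hm).2 min_le_max
  rw [← sq_abs ((x - 1) / _), abs_div, abs_of_pos hm, abs_sub_comm, ← max_sub_min_eq_abs', sub_div,
    div_self hm.ne']
  gcongr

end Ratios

theorem stmt_11_general (k K : ℝ) (hk : 0 < k) (ν : ℝ) (hν : ν ∈ Set.Icc (0:ℝ) 1)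
    (x : ℝ) (hx : x ∈ Set.Icc k K) :
    Real.exp (1/2 * ν * (1 - ν) * (1 - min 1 K / max 1 k)^2) * x ^ ν ≤ 1 - ν + ν * x ∧
    1 - ν + ν * x ≤ Real.exp (1/2 * ν * (1 - ν) * (max 1 K / min 1 k - 1)^2) * x ^ ν := by
  obtain ⟨hν₀, hν₁⟩ := hν
  obtain ⟨hkx, hxK⟩ := hx
  have hx₀ : 0 < x := hk.trans_le hkx
  have hmean : 0 < 1 - ν + ν * x := by
    nlinarith [mul_le_mul_of_nonneg_left (min_le_right 1 x) hν₀,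
      mul_le_mul_of_nonneg_left (min_le_left 1 x) (sub_nonneg.2 hν₁), lt_min one_pos hx₀]
  have hνν : 0 ≤ 1 / 2 * ν * (1 - ν) := by nlinarith
  have hgap : log (1 - ν + ν * x) - ν * log x =
      log ((1 - ν) * 1 + ν * x) - ((1 - ν) * log 1 + ν * log x) := by simp
  constructor
  · rw [exp_mul_rpow_le_iff hx₀ hmean, hgap]
    calc 1 / 2 * ν * (1 - ν) * (1 - min 1 K / max 1 k) ^ 2
        ≤ 1 / 2 * ν * (1 - ν) * ((x - 1) / max 1 x) ^ 2 :=
          mul_le_mul_of_nonneg_left (one_sub_min_div_max_sq_le hk hkx hxK) hνν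
      _ ≤ _ := le_log_convexComb_sub (lt_max_of_lt_left one_pos)
          ⟨one_pos, le_max_left 1 x⟩ ⟨hx₀, le_max_right 1 x⟩ hν₀ hν₁
  · rw [le_exp_mul_rpow_iff hx₀ hmean, hgap]
    calc _ ≤ 1 / 2 * ν * (1 - ν) * ((x - 1) / min 1 x) ^ 2 :=
          log_convexComb_sub_le (lt_min one_pos hx₀) (min_le_left 1 x) (min_le_right 1 x) hν₀ hν₁
      _ ≤ 1 / 2 * ν * (1 - ν) * (max 1 K / min 1 k - 1) ^ 2 :=
          mul_le_mul_of_nonneg_left (sq_le_max_div_min_sub_one_sq hk hkx hxK) hνν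

theorem stmt_11 (k K : ℝ) (hk : 0 < k) (hkK : k ≤ K) (ν : ℝ) (hν : ν ∈ Set.Icc (0:ℝ) 1)
    (x : ℝ) (hx : x ∈ Set.Icc k K) :
    Real.exp (1/2 * ν * (1 - ν) * (1 - min 1 K / max 1 k)^2) * x ^ ν ≤ 1 - ν + ν * x ∧
    1 - ν + ν * x ≤ Real.exp (1/2 * ν * (1 - ν) * (max 1 K / min 1 k - 1)^2) * x ^ ν :=
  stmt_11_general k K hk ν hν x hx
end

section
/- Let f : I → ℝ be twice differentiable on the interior of interval I with d ≤ f'' ≤ D there, and let γ < Γ be points in the interior of I. Then for all x ∈ [γ,Γ]: (1/2)·(Γ−x)·(x−γ)·d ≤ ((Γ−x)·f(γ) + (x−γ)·f(Γ))/(Γ−γ) − f(x) ≤ (1/2)·(Γ−x)·(x−γ)·D. -/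
/-!
Subtracting the quadratic `D / 2 * t ^ 2` turns the bound `f'' ≤ D` into convexity of
`t ↦ D / 2 * t ^ 2 - f t`, and the chord inequality for that convex function at `x ∈ [γ, Γ]` is,
after expanding the quadratic, exactly the upper bound. The lower bound is the upper bound for `-f`.
-/

open Set

theorem ConvexOn.sub_mul_le_of_mem_Icc {𝕜 : Type*} [Field 𝕜] [LinearOrder 𝕜]
    [IsStrictOrderedRing 𝕜] {s : Set 𝕜} {g : 𝕜 → 𝕜} (hg : ConvexOn 𝕜 s g) {a b x : 𝕜}
    (ha : a ∈ s) (hb : b ∈ s) (hx : x ∈ Icc a b) :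
    (b - a) * g x ≤ (b - x) * g a + (x - a) * g b := by
  rcases hx.1.eq_or_lt with rfl | hax
  · simp
  rcases hx.2.eq_or_lt with rfl | hxb
  · simp
  exact hg.secant_mono_aux1 ha hb hax hxb

theorem convexOn_of_hasDerivAt2_nonneg {S : Set ℝ} (hS : Convex ℝ S) (hSo : IsOpen S)
    {f f' f'' : ℝ → ℝ} (hf : ∀ t ∈ S, HasDerivAt f (f' t) t)
    (hf' : ∀ t ∈ S, HasDerivAt f' (f'' t) t) (hf''₀ : ∀ t ∈ S, 0 ≤ f'' t) :
    ConvexOn ℝ S f := by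
  refine convexOn_of_hasDerivWithinAt2_nonneg hS (f' := f') (f'' := f'')
    (fun t ht ↦ (hf t ht).continuousAt.continuousWithinAt) ?_ ?_ ?_ <;>
    simp only [hSo.interior_eq]
  · exact fun t ht ↦ (hf t ht).hasDerivWithinAt
  · exact fun t ht ↦ (hf' t ht).hasDerivWithinAt
  · exact hf''₀

theorem convexOn_mul_sq_sub_of_deriv2_le {S : Set ℝ} (hS : Convex ℝ S) (hSo : IsOpen S)
    {f f' f'' : ℝ → ℝ} (hf : ∀ t ∈ S, HasDerivAt f (f' t) t)
    (hf' : ∀ t ∈ S, HasDerivAt f' (f'' t) t) {D : ℝ} (hD : ∀ t ∈ S, f'' t ≤ D) :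
    ConvexOn ℝ S (fun t ↦ D / 2 * t ^ 2 - f t) := by
  refine convexOn_of_hasDerivAt2_nonneg hS hSo (f' := fun t ↦ D * t - f' t)
    (f'' := fun t ↦ D - f'' t) (fun t ht ↦ ?_) (fun t ht ↦ ?_) (fun t ht ↦ sub_nonneg.2 (hD t ht))
  · exact (((hasDerivAt_pow 2 t).const_mul (D / 2)).sub (hf t ht)).congr_deriv (by ring)
  · exact (((hasDerivAt_id t).const_mul D).sub (hf' t ht)).congr_deriv (by ring)

theorem chord_sub_le_of_deriv2_le {S : Set ℝ} (hS : Convex ℝ S) (hSo : IsOpen S)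
    {f f' f'' : ℝ → ℝ} (hf : ∀ t ∈ S, HasDerivAt f (f' t) t)
    (hf' : ∀ t ∈ S, HasDerivAt f' (f'' t) t) {D : ℝ} (hD : ∀ t ∈ S, f'' t ≤ D)
    {γ Γ x : ℝ} (hγ : γ ∈ S) (hΓ : Γ ∈ S) (hγΓ : γ < Γ) (hx : x ∈ Icc γ Γ) :
    ((Γ - x) * f γ + (x - γ) * f Γ) / (Γ - γ) - f x ≤ 1 / 2 * (Γ - x) * (x - γ) * D := by
  have hchord := (convexOn_mul_sq_sub_of_deriv2_le hS hSo hf hf' hD).sub_mul_le_of_mem_Icc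
    hγ hΓ hx
  rw [sub_le_iff_le_add, div_le_iff₀ (sub_pos.2 hγΓ)]
  linear_combination hchord

theorem stmt_12 (I : Set ℝ) (hI : I.OrdConnected) (f f' f'' : ℝ → ℝ)
    (hf : ∀ t ∈ interior I, HasDerivAt f (f' t) t)
    (hf' : ∀ t ∈ interior I, HasDerivAt f' (f'' t) t)
    (d D : ℝ) (hd : ∀ t ∈ interior I, d ≤ f'' t) (hD : ∀ t ∈ interior I, f'' t ≤ D)
    (γ Γ : ℝ) (hγ : γ ∈ interior I) (hΓ : Γ ∈ interior I) (hγΓ : γ < Γ)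
    (x : ℝ) (hx : x ∈ Set.Icc γ Γ) :
    1/2 * (Γ - x) * (x - γ) * d ≤ ((Γ - x) * f γ + (x - γ) * f Γ) / (Γ - γ) - f x ∧
    ((Γ - x) * f γ + (x - γ) * f Γ) / (Γ - γ) - f x ≤ 1/2 * (Γ - x) * (x - γ) * D := by
  have hS : Convex ℝ (interior I) := hI.convex.interior
  have hneg := chord_sub_le_of_deriv2_le hS isOpen_interior (f := -f) (f' := -f') (f'' := -f'')
    (fun t ht ↦ (hf t ht).neg) (fun t ht ↦ (hf' t ht).neg) (D := -d)
    (fun t ht ↦ neg_le_neg (hd t ht)) hγ hΓ hγΓ hx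
  refine ⟨?_, chord_sub_le_of_deriv2_le hS isOpen_interior hf hf' hD hγ hΓ hγΓ hx⟩
  simp only [Pi.neg_apply, mul_neg, ← neg_add, neg_div] at hneg
  linarith
end

section
/- Let p ∈ (0,1) and 0 < γ < Γ. For all x ∈ [γ,Γ]: p·(1−p)·Γ^(p−2)·(Γ−x)·(x−γ)/2 ≤ x^p − ((Γ−x)·γ^p + (x−γ)·Γ^p)/(Γ−γ) ≤ p·(1−p)·γ^(p−2)·(Γ−x)·(x−γ)/2. -/
/-!
If `f'' ≥ m` on `(a, b)`, then `f t + m (b - t) (t - a) / 2` is convex and agrees with `f` at `a`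
and `b`, so it lies below the chord of `f`; symmetrically if `f'' ≤ M`. Apply both bounds to
`t ↦ t ^ p`, whose second derivative `-p (1 - p) t ^ (p - 2)` is monotone on `[γ, Γ]`.
-/

open Set

section Chord

variable {f f' f'' : ℝ → ℝ} {a b m M x : ℝ}

theorem ConvexOn.le_chord (hf : ConvexOn ℝ (Icc a b) f) (hab : a < b) (hx : x ∈ Icc a b) :
    f x ≤ ((b - x) * f a + (x - a) * f b) / (b - a) := by
  have hba : 0 < b - a := sub_pos.mpr hab
  have key := hf.2 (left_mem_Icc.mpr hab.le) (right_mem_Icc.mpr hab.le)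
    (div_nonneg (sub_nonneg.mpr hx.2) hba.le) (div_nonneg (sub_nonneg.mpr hx.1) hba.le)
    (by field_simp; ring)
  have hcomb : (b - x) / (b - a) * a + (x - a) / (b - a) * b = x := by field_simp; ring
  simp only [smul_eq_mul, hcomb] at key
  calc f x ≤ (b - x) / (b - a) * f a + (x - a) / (b - a) * f b := key
    _ = ((b - x) * f a + (x - a) * f b) / (b - a) := by ring

theorem sub_chord_le_of_le_deriv2 (hab : a < b) (hf : ContinuousOn f (Icc a b))
    (hf' : ∀ t ∈ Ioo a b, HasDerivAt f (f' t) t) (hf'' : ∀ t ∈ Ioo a b, HasDerivAt f' (f'' t) t)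
    (hm : ∀ t ∈ Ioo a b, m ≤ f'' t) (hx : x ∈ Icc a b) :
    f x - ((b - x) * f a + (x - a) * f b) / (b - a) ≤ -m * (b - x) * (x - a) / 2 := by
  set g : ℝ → ℝ := fun t ↦ f t + m * ((b - t) * (t - a)) / 2
  have hg : ConvexOn ℝ (Icc a b) g := by
    refine convexOn_of_hasDerivWithinAt2_nonneg (f' := fun t ↦ f' t + m * (a + b - 2 * t) / 2)
      (f'' := fun t ↦ f'' t - m) (convex_Icc a b) (by fun_prop) ?_ ?_ ?_ <;>
      simp only [interior_Icc]
    · intro t ht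
      have hq : HasDerivAt (fun t ↦ m * ((b - t) * (t - a)) / 2) (m * (a + b - 2 * t) / 2) t := by
        have := ((((hasDerivAt_id t).const_sub b).mul ((hasDerivAt_id t).sub_const a)).const_mul
          m).div_const 2
        exact this.congr_deriv (by simp only [id_eq]; ring)
      exact ((hf' t ht).add hq).hasDerivWithinAt
    · intro t ht
      have hq : HasDerivAt (fun t ↦ m * (a + b - 2 * t) / 2) (-m) t := by
        have := ((((hasDerivAt_id t).const_mul 2).const_sub (a + b)).const_mul m).div_const 2
        exact this.congr_deriv (by ring)
      exact ((hf'' t ht).add hq).hasDerivWithinAt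
    · exact fun t ht ↦ sub_nonneg.mpr (hm t ht)
  have hgx := hg.le_chord hab hx
  simp only [g, sub_self, mul_zero, zero_mul, zero_div, add_zero] at hgx
  linarith

theorem le_sub_chord_of_deriv2_le (hab : a < b) (hf : ContinuousOn f (Icc a b))
    (hf' : ∀ t ∈ Ioo a b, HasDerivAt f (f' t) t) (hf'' : ∀ t ∈ Ioo a b, HasDerivAt f' (f'' t) t)
    (hM : ∀ t ∈ Ioo a b, f'' t ≤ M) (hx : x ∈ Icc a b) :
    -M * (b - x) * (x - a) / 2 ≤ f x - ((b - x) * f a + (x - a) * f b) / (b - a) := by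
  have h := sub_chord_le_of_le_deriv2 (f := -f) (f' := -f') (f'' := -f'') (m := -M) hab hf.neg
    (fun t ht ↦ (hf' t ht).neg) (fun t ht ↦ (hf'' t ht).neg) (fun t ht ↦ neg_le_neg (hM t ht)) hx
  simp only [Pi.neg_apply] at h
  have hchord : ((b - x) * -f a + (x - a) * -f b) / (b - a)
      = -(((b - x) * f a + (x - a) * f b) / (b - a)) := by ring
  linarith

end Chord

theorem stmt_13 (p : ℝ) (hp : p ∈ Set.Ioo (0:ℝ) 1) (γ Γ : ℝ) (hγ : 0 < γ) (hγΓ : γ < Γ)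
    (x : ℝ) (hx : x ∈ Set.Icc γ Γ) :
    p * (1 - p) * Γ ^ (p - 2) * (Γ - x) * (x - γ) / 2
      ≤ x ^ p - ((Γ - x) * γ ^ p + (x - γ) * Γ ^ p) / (Γ - γ) ∧
    x ^ p - ((Γ - x) * γ ^ p + (x - γ) * Γ ^ p) / (Γ - γ)
      ≤ p * (1 - p) * γ ^ (p - 2) * (Γ - x) * (x - γ) / 2 := by
  obtain ⟨hp0, hp1⟩ := hp
  have hc : 0 < p * (1 - p) := mul_pos hp0 (sub_pos.mpr hp1)
  have hcont : ContinuousOn (fun t : ℝ ↦ t ^ p) (Icc γ Γ) :=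
    (continuous_id.rpow_const fun _ ↦ Or.inr hp0.le).continuousOn
  have hf' : ∀ t ∈ Ioo γ Γ, HasDerivAt (fun t : ℝ ↦ t ^ p) (p * t ^ (p - 1)) t :=
    fun t ht ↦ Real.hasDerivAt_rpow_const (Or.inl (hγ.trans ht.1).ne')
  have hf'' : ∀ t ∈ Ioo γ Γ,
      HasDerivAt (fun t : ℝ ↦ p * t ^ (p - 1)) (-(p * (1 - p)) * t ^ (p - 2)) t := by
    intro t ht
    have := (Real.hasDerivAt_rpow_const (p := p - 1) (Or.inl (hγ.trans ht.1).ne')).const_mul p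
    rw [show p - 1 - 1 = p - 2 by ring] at this
    exact this.congr_deriv (by ring)
  constructor
  · refine (le_sub_chord_of_deriv2_le (M := -(p * (1 - p) * Γ ^ (p - 2))) hγΓ hcont hf' hf''
      (fun t ht ↦ ?_) hx).trans_eq' (by ring)
    have : Γ ^ (p - 2) ≤ t ^ (p - 2) :=
      Real.rpow_le_rpow_of_nonpos (hγ.trans ht.1) ht.2.le (by linarith)
    rw [neg_mul, neg_le_neg_iff]
    exact mul_le_mul_of_nonneg_left this hc.le
  · refine (sub_chord_le_of_le_deriv2 (m := -(p * (1 - p) * γ ^ (p - 2))) hγΓ hcont hf' hf''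
      (fun t ht ↦ ?_) hx).trans_eq (by ring)
    have : t ^ (p - 2) ≤ γ ^ (p - 2) :=
      Real.rpow_le_rpow_of_nonpos hγ ht.1.le (by linarith)
    rw [neg_mul, neg_le_neg_iff]
    exact mul_le_mul_of_nonneg_left this hc.le
end

section
/- Let p ≥ 2 and 0 < γ < Γ. For all x ∈ [γ,Γ]: (1/2)·p·(p−1)·γ^(p−2)·(Γ−x)·(x−γ) ≤ ((Γ−x)·γ^p + (x−γ)·Γ^p)/(Γ−γ) − x^p ≤ (1/2)·p·(p−1)·Γ^(p−2)·(Γ−x)·(x−γ). -/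
/-!
Write `chordGap f a b x` for the height of the chord of `f` over `[a, b]` above the graph at `x`.
It is linear in `f`, nonnegative for convex `f`, and equals `c / 2 * (b - x) * (x - a)` for
`f t = c / 2 * t ^ 2`. Since `m ≤ (t ^ p)'' ≤ M` on `[γ, Γ]` for `m = p (p - 1) γ ^ (p - 2)` and
`M = p (p - 1) Γ ^ (p - 2)`, both `t ^ p - m / 2 * t ^ 2` and `M / 2 * t ^ 2 - t ^ p` are convex
there, and the two bounds are the nonnegativity of their chord gaps.
-/

open Set

noncomputable section

def chordGap (f : ℝ → ℝ) (a b x : ℝ) : ℝ :=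
  ((b - x) * f a + (x - a) * f b) / (b - a) - f x

theorem chordGap_sub (f g : ℝ → ℝ) (a b x : ℝ) :
    chordGap (f - g) a b x = chordGap f a b x - chordGap g a b x := by
  simp only [chordGap, Pi.sub_apply]
  ring

theorem chordGap_half_mul_sq {a b : ℝ} (hab : a ≠ b) (c x : ℝ) :
    chordGap (fun t => c / 2 * t ^ 2) a b x = c / 2 * ((b - x) * (x - a)) := by
  have : b - a ≠ 0 := sub_ne_zero.mpr hab.symm
  simp only [chordGap]
  field_simp
  ring

theorem ConvexOn.chordGap_nonneg {f : ℝ → ℝ} {a b x : ℝ} (hf : ConvexOn ℝ (Icc a b) f)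
    (hab : a < b) (hx : x ∈ Icc a b) : 0 ≤ chordGap f a b x := by
  have hba : 0 < b - a := sub_pos.mpr hab
  have hconv := hf.2 (left_mem_Icc.mpr hab.le) (right_mem_Icc.mpr hab.le)
    (div_nonneg (sub_nonneg.mpr hx.2) hba.le) (div_nonneg (sub_nonneg.mpr hx.1) hba.le)
    (by rw [← add_div, div_eq_one_iff_eq hba.ne']; ring)
  have hpoint : ((b - x) / (b - a)) • a + ((x - a) / (b - a)) • b = x := by
    simp only [smul_eq_mul]
    field_simp
    ring
  rw [hpoint, smul_eq_mul, smul_eq_mul] at hconv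
  rw [chordGap, sub_nonneg]
  calc f x ≤ (b - x) / (b - a) * f a + (x - a) / (b - a) * f b := hconv
    _ = ((b - x) * f a + (x - a) * f b) / (b - a) := by ring

theorem convexOn_sub_of_deriv2_le {s : Set ℝ} (hs : Convex ℝ s) {f f' f'' g g' g'' : ℝ → ℝ}
    (hf : ∀ x ∈ s, HasDerivAt f (f' x) x) (hf' : ∀ x ∈ s, HasDerivAt f' (f'' x) x)
    (hg : ∀ x ∈ s, HasDerivAt g (g' x) x) (hg' : ∀ x ∈ s, HasDerivAt g' (g'' x) x)
    (hle : ∀ x ∈ interior s, g'' x ≤ f'' x) : ConvexOn ℝ s (f - g) := by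
  have hint : interior s ⊆ s := interior_subset
  refine convexOn_of_hasDerivWithinAt2_nonneg (f' := f' - g') (f'' := f'' - g'') hs
    (fun x hx => ((hf x hx).sub (hg x hx)).continuousAt.continuousWithinAt)
    (fun x hx => ((hf x (hint hx)).sub (hg x (hint hx))).hasDerivWithinAt)
    (fun x hx => ((hf' x (hint hx)).sub (hg' x (hint hx))).hasDerivWithinAt)
    (fun x hx => sub_nonneg.mpr (hle x hx))

theorem hasDerivAt_half_mul_sq (c x : ℝ) :
    HasDerivAt (fun t => c / 2 * t ^ 2) (c * x) x :=
  ((hasDerivAt_pow 2 x).const_mul (c / 2)).congr_deriv (by norm_num; ring)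

theorem hasDerivAt_const_mul_rpow_sub_one {p : ℝ} (hp : 2 ≤ p) (x : ℝ) :
    HasDerivAt (fun t => p * t ^ (p - 1)) (p * (p - 1) * x ^ (p - 2)) x := by
  have h := (Real.hasDerivAt_rpow_const (x := x) (p := p - 1) (Or.inr (by linarith))).const_mul p
  rw [show p - 1 - 1 = p - 2 by ring, ← mul_assoc] at h
  exact h

theorem stmt_14 (p : ℝ) (hp : 2 ≤ p) (γ Γ : ℝ) (hγ : 0 < γ) (hγΓ : γ < Γ)
    (x : ℝ) (hx : x ∈ Set.Icc γ Γ) :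
    1/2 * p * (p - 1) * γ ^ (p - 2) * (Γ - x) * (x - γ)
      ≤ ((Γ - x) * γ ^ p + (x - γ) * Γ ^ p) / (Γ - γ) - x ^ p ∧
    ((Γ - x) * γ ^ p + (x - γ) * Γ ^ p) / (Γ - γ) - x ^ p
      ≤ 1/2 * p * (p - 1) * Γ ^ (p - 2) * (Γ - x) * (x - γ) := by
  have hrpow (t : ℝ) : HasDerivAt (fun t : ℝ => t ^ p) (p * t ^ (p - 1)) t :=
    Real.hasDerivAt_rpow_const (Or.inr (by linarith))
  have hcoeff : 0 ≤ p * (p - 1) := by nlinarith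
  have hmono {s t : ℝ} (hs : 0 ≤ s) (hst : s ≤ t) :
      p * (p - 1) * s ^ (p - 2) ≤ p * (p - 1) * t ^ (p - 2) :=
    mul_le_mul_of_nonneg_left (Real.rpow_le_rpow hs hst (by linarith)) hcoeff
  have hlower := (convexOn_sub_of_deriv2_le (convex_Icc γ Γ)
    (fun t _ => hrpow t) (fun t _ => hasDerivAt_const_mul_rpow_sub_one hp t)
    (fun t _ => hasDerivAt_half_mul_sq _ t) (fun t _ => hasDerivAt_const_mul _)
    (fun t ht => by rw [interior_Icc] at ht; exact hmono hγ.le ht.1.le)).chordGap_nonneg hγΓ hx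
  have hupper := (convexOn_sub_of_deriv2_le (convex_Icc γ Γ)
    (fun t _ => hasDerivAt_half_mul_sq _ t) (fun t _ => hasDerivAt_const_mul _)
    (fun t _ => hrpow t) (fun t _ => hasDerivAt_const_mul_rpow_sub_one hp t)
    (fun t ht => by rw [interior_Icc] at ht; exact hmono (hγ.le.trans ht.1.le) ht.2.le)
    ).chordGap_nonneg hγΓ hx
  rw [chordGap_sub, chordGap_half_mul_sq hγΓ.ne] at hlower hupper
  simp only [chordGap] at hlower hupper
  constructor <;> linarith

end
end

section
/- Let 0 < γ ≤ 1 ≤ Γ and let x ∈ [γ,Γ], ν ∈ [0,1]. Then (1/(2Γ²))·ν·(1−ν)·(x−1)² ≤ ln(1 − ν + ν·x) − ν·ln x ≤ (1/(2γ²))·ν·(1−ν)·(x−1)². -/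
/-!
The middle term is the Jensen gap of `log` between the points `1` and `x` with weights `1 - ν`
and `ν`. On `[γ, Γ]` the second derivative `-1/t²` of `log` lies in `[-1/γ², -1/Γ²]`, so `log` is
`1/Γ²`-strongly concave and `log + t²/(2γ²)` is convex; evaluating both at the two points gives the
lower and the upper bound.
-/

open Set Real

section SecondDerivative

variable {D : Set ℝ} {f f' f'' : ℝ → ℝ} {m : ℝ}

theorem strongConvexOn_of_hasDerivAt2_ge (hD : Convex ℝ D) (hf : ContinuousOn f D)
    (hf' : ∀ x ∈ interior D, HasDerivAt f (f' x) x)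
    (hf'' : ∀ x ∈ interior D, HasDerivAt f' (f'' x) x)
    (hm : ∀ x ∈ interior D, m ≤ f'' x) : StrongConvexOn D m f := by
  have hnorm : (fun x : ℝ ↦ f x - m / 2 * ‖x‖ ^ 2) = fun x ↦ f x - m / 2 * x ^ 2 := by
    simp only [norm_eq_abs, sq_abs]
  rw [strongConvexOn_iff_convex, hnorm]
  refine convexOn_of_hasDerivWithinAt2_nonneg (f' := fun x ↦ f' x - m * x)
    (f'' := fun x ↦ f'' x - m) hD (hf.sub (by fun_prop)) (fun x hx ↦ ?_) (fun x hx ↦ ?_)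
    (fun x hx ↦ sub_nonneg.2 (hm x hx))
  · have hsq : HasDerivAt (fun x ↦ m / 2 * x ^ 2) (m * x) x :=
      ((hasDerivAt_pow 2 x).const_mul (m / 2)).congr_deriv (by push_cast; ring)
    exact ((hf' x hx).fun_sub hsq).hasDerivWithinAt
  · simpa using ((hf'' x hx).fun_sub ((hasDerivAt_id x).const_mul m)).hasDerivWithinAt

theorem strongConcaveOn_of_hasDerivAt2_le (hD : Convex ℝ D) (hf : ContinuousOn f D)
    (hf' : ∀ x ∈ interior D, HasDerivAt f (f' x) x)
    (hf'' : ∀ x ∈ interior D, HasDerivAt f' (f'' x) x)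
    (hm : ∀ x ∈ interior D, f'' x ≤ -m) : StrongConcaveOn D m f := by
  have hneg : StrongConvexOn D m (-f) :=
    strongConvexOn_of_hasDerivAt2_ge hD hf.neg (fun x hx ↦ (hf' x hx).neg)
      (fun x hx ↦ (hf'' x hx).neg) fun x hx ↦ le_neg.2 (hm x hx)
  exact neg_neg f ▸ hneg.neg

end SecondDerivative

section Log

variable {γ Γ : ℝ}

theorem continuousOn_log_Icc (hγ : 0 < γ) : ContinuousOn log (Icc γ Γ) :=
  continuousOn_log.mono fun _ hx ↦ (hγ.trans_le hx.1).ne'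

theorem strongConcaveOn_log_Icc (hγ : 0 < γ) : StrongConcaveOn (Icc γ Γ) (Γ ^ 2)⁻¹ log := by
  refine strongConcaveOn_of_hasDerivAt2_le (f' := (·⁻¹)) (f'' := fun x ↦ -(x ^ 2)⁻¹)
    (convex_Icc γ Γ) (continuousOn_log_Icc hγ) ?_ ?_ ?_ <;> rw [interior_Icc] <;>
    intro x hx <;> have hx0 : 0 < x := hγ.trans hx.1
  · exact hasDerivAt_log hx0.ne'
  · simpa using hasDerivAt_inv hx0.ne'
  · gcongr
    exact hx.2.le

theorem strongConvexOn_log_Icc (hγ : 0 < γ) : StrongConvexOn (Icc γ Γ) (-(γ ^ 2)⁻¹) log := by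
  refine strongConvexOn_of_hasDerivAt2_ge (f' := (·⁻¹)) (f'' := fun x ↦ -(x ^ 2)⁻¹)
    (convex_Icc γ Γ) (continuousOn_log_Icc hγ) ?_ ?_ ?_ <;> rw [interior_Icc] <;>
    intro x hx <;> have hx0 : 0 < x := hγ.trans hx.1
  · exact hasDerivAt_log hx0.ne'
  · simpa using hasDerivAt_inv hx0.ne'
  · gcongr
    exact hx.1.le

end Log

theorem stmt_15 (γ Γ : ℝ) (hγ : 0 < γ) (hγ1 : γ ≤ 1) (h1Γ : 1 ≤ Γ)
    (x : ℝ) (hx : x ∈ Set.Icc γ Γ) (ν : ℝ) (hν : ν ∈ Set.Icc (0:ℝ) 1) :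
    1/(2 * Γ^2) * ν * (1 - ν) * (x - 1)^2
      ≤ Real.log (1 - ν + ν * x) - ν * Real.log x ∧
    Real.log (1 - ν + ν * x) - ν * Real.log x
      ≤ 1/(2 * γ^2) * ν * (1 - ν) * (x - 1)^2 := by
  have h1 : (1 : ℝ) ∈ Icc γ Γ := ⟨hγ1, h1Γ⟩
  have hlower := (strongConcaveOn_log_Icc hγ).2 h1 hx (sub_nonneg.2 hν.2) hν.1 (sub_add_cancel 1 ν)
  have hupper := (strongConvexOn_log_Icc hγ).2 h1 hx (sub_nonneg.2 hν.2) hν.1 (sub_add_cancel 1 ν)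
  simp only [smul_eq_mul, mul_one, log_one, mul_zero, zero_add, norm_eq_abs, sq_abs]
    at hlower hupper
  have hsq : (1 - x) ^ 2 = (x - 1) ^ 2 := by ring
  rw [hsq] at hlower hupper
  constructor
  · calc 1 / (2 * Γ ^ 2) * ν * (1 - ν) * (x - 1) ^ 2
          = (1 - ν) * ν * ((Γ ^ 2)⁻¹ / 2 * (x - 1) ^ 2) := by ring
      _ ≤ _ := by linarith
  · calc _ ≤ -((1 - ν) * ν * (-(γ ^ 2)⁻¹ / 2 * (x - 1) ^ 2)) := by linarith
      _ = 1 / (2 * γ ^ 2) * ν * (1 - ν) * (x - 1) ^ 2 := by ring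
end

section
/- Let A, B be positive operators on a complex Hilbert space with k·I ≤ A^(−1/2)·B·A^(−1/2) ≤ K·I for some 0 < k ≤ K, and let ν ∈ [0,1]. Define f_min(x) = (x+1−|x−1|)·(ln x)² and f_max(x) = (x+1+|x−1|)·(ln x)². Then (1/4)·ν·(1−ν)·(min_{x∈[k,K]} f_min(x))·A ≤ (1−ν)·A + ν·B − A♯_ν B ≤ (1/4)·ν·(1−ν)·(max_{x∈[k,K]} f_max(x))·A in the operator order. -/
/-!
With `T = A^{-1/2} B A^{-1/2}` one has `(1-ν)A + νB - A ♯_ν B = A^{1/2} g(T) A^{1/2}` for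
`g(x) = 1 - ν + νx - x^ν`, so by the functional calculus and conjugation by `A^{1/2}` it suffices
to bound `g` on `[k, K] ⊇ σ(T)`. Now `g(x)` is the gap in Jensen's inequality for `t ↦ x^t`
between the endpoints `0` and `1`, whose second derivative `x^t (log x)^2` lies between
`min(x,1) (log x)^2` and `max(x,1) (log x)^2` for `t ∈ [0,1]`; comparing with the parabola
`t(1-t)` gives `g(x)` between `ν(1-ν)/2 · min(x,1) (log x)^2` and `ν(1-ν)/2 · max(x,1) (log x)^2`,
and `x + 1 ∓ |x - 1| = 2 min(x,1)`, resp. `2 max(x,1)`.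
-/

open Set

theorem mul_le_jensen_gap_of_le_deriv2 {f f' f'' : ℝ → ℝ} {m ν : ℝ}
    (hf : ∀ t, HasDerivAt f (f' t) t) (hf' : ∀ t, HasDerivAt f' (f'' t) t)
    (hm : ∀ t ∈ Ioo 0 1, m ≤ f'' t) (hν : ν ∈ Icc 0 1) :
    m / 2 * (ν * (1 - ν)) ≤ (1 - ν) * f 0 + ν * f 1 - f ν := by
  have hg : ∀ t, HasDerivAt (fun s => f s - m / 2 * s ^ 2) (f' t - m * t) t := fun t =>
    ((hf t).sub ((hasDerivAt_pow 2 t).const_mul (m / 2))).congr_deriv (by push_cast; ring)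
  have hg' : ∀ t, HasDerivAt (fun s => f' s - m * s) (f'' t - m) t := fun t =>
    ((hf' t).sub ((hasDerivAt_id t).const_mul m)).congr_deriv (by simp)
  have hconv : ConvexOn ℝ (Icc 0 1) fun s => f s - m / 2 * s ^ 2 :=
    convexOn_of_hasDerivWithinAt2_nonneg (convex_Icc 0 1)
      (fun t _ => (hg t).continuousAt.continuousWithinAt)
      (fun t _ => (hg t).hasDerivWithinAt) (fun t _ => (hg' t).hasDerivWithinAt)
      (fun t ht => sub_nonneg.2 (hm t (by simpa using ht)))
  have := hconv.2 (left_mem_Icc.2 zero_le_one) (right_mem_Icc.2 zero_le_one)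
    (sub_nonneg.2 hν.2) hν.1 (sub_add_cancel 1 ν)
  simp only [smul_eq_mul, mul_zero, mul_one, zero_add] at this
  linear_combination this

theorem jensen_gap_le_mul_of_deriv2_le {f f' f'' : ℝ → ℝ} {M ν : ℝ}
    (hf : ∀ t, HasDerivAt f (f' t) t) (hf' : ∀ t, HasDerivAt f' (f'' t) t)
    (hM : ∀ t ∈ Ioo 0 1, f'' t ≤ M) (hν : ν ∈ Icc 0 1) :
    (1 - ν) * f 0 + ν * f 1 - f ν ≤ M / 2 * (ν * (1 - ν)) := by
  have := mul_le_jensen_gap_of_le_deriv2 (fun t => (hf t).neg) (fun t => (hf' t).neg)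
    (m := -M) (fun t ht => neg_le_neg (hM t ht)) hν
  simp only [Pi.neg_apply] at this
  linear_combination this

namespace Real

theorem min_le_rpow {x t : ℝ} (hx : 0 < x) (ht : t ∈ Icc 0 1) : min x 1 ≤ x ^ t := by
  rcases le_total x 1 with h | h
  · exact (min_le_left _ _).trans (self_le_rpow_of_le_one hx.le h ht.2)
  · exact (min_le_right _ _).trans (one_le_rpow h ht.1)

theorem rpow_le_max {x t : ℝ} (hx : 0 < x) (ht : t ∈ Icc 0 1) : x ^ t ≤ max x 1 := by
  rcases le_total x 1 with h | h
  · exact (rpow_le_one hx.le h ht.1).trans (le_max_right _ _)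
  · exact (rpow_le_self_of_one_le h ht.2).trans (le_max_left _ _)

theorem one_sub_add_mul_sub_rpow_bounds {x ν : ℝ} (hx : 0 < x) (hν : ν ∈ Icc 0 1) :
    ν * (1 - ν) / 2 * (min x 1 * log x ^ 2) ≤ 1 - ν + ν * x - x ^ ν ∧
      1 - ν + ν * x - x ^ ν ≤ ν * (1 - ν) / 2 * (max x 1 * log x ^ 2) := by
  have hf : ∀ t : ℝ, HasDerivAt (fun s => x ^ s) (x ^ t * log x) t := fun t =>
    (hasStrictDerivAt_const_rpow hx t).hasDerivAt
  have hf' : ∀ t : ℝ, HasDerivAt (fun s => x ^ s * log x) (x ^ t * log x ^ 2) t := fun t =>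
    ((hf t).mul_const _).congr_deriv (by ring)
  have hgap : (1 - ν) * x ^ (0 : ℝ) + ν * x ^ (1 : ℝ) - x ^ ν = 1 - ν + ν * x - x ^ ν := by
    simp
  constructor
  · have := mul_le_jensen_gap_of_le_deriv2 hf hf' (m := min x 1 * log x ^ 2) (fun t ht =>
      mul_le_mul_of_nonneg_right (min_le_rpow hx (Ioo_subset_Icc_self ht)) (sq_nonneg _)) hν
    rw [hgap] at this
    linarith
  · have := jensen_gap_le_mul_of_deriv2_le hf hf' (M := max x 1 * log x ^ 2) (fun t ht =>
      mul_le_mul_of_nonneg_right (rpow_le_max hx (Ioo_subset_Icc_self ht)) (sq_nonneg _)) hν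
    rw [hgap] at this
    linarith

theorem add_one_sub_abs_sub_one (x : ℝ) : x + 1 - |x - 1| = 2 * min x 1 := by
  simpa [two_mul, abs_sub_comm] using (two_nsmul_inf_eq_add_sub_abs_sub x 1).symm

theorem add_one_add_abs_sub_one (x : ℝ) : x + 1 + |x - 1| = 2 * max x 1 := by
  simpa [two_mul, abs_sub_comm] using (two_nsmul_sup_eq_add_add_abs_sub x 1).symm

end Real

section Bounds

variable {k K ν x : ℝ} {f : ℝ → ℝ}

theorem continuousOn_mul_log_sq_Icc {g : ℝ → ℝ} (hg : Continuous g) (hk : 0 < k) :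
    ContinuousOn (fun x => g x * Real.log x ^ 2) (Icc k K) :=
  hg.continuousOn.mul ((Real.continuousOn_log.mono fun _ hx => (hk.trans_le hx.1).ne').pow 2)

theorem mul_sInf_image_le_one_sub_add_mul_sub_rpow (hk : 0 < k) (hν : ν ∈ Icc 0 1)
    (hf : ∀ x > (0 : ℝ), f x = (x + 1 - |x - 1|) * Real.log x ^ 2) (hx : x ∈ Icc k K) :
    1 / 4 * ν * (1 - ν) * sInf (f '' Icc k K) ≤ 1 - ν + ν * x - x ^ ν := by
  have hx0 : 0 < x := hk.trans_le hx.1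
  have hbdd : BddBelow (f '' Icc k K) :=
    (isCompact_Icc.image_of_continuousOn ((continuousOn_mul_log_sq_Icc (by fun_prop) hk).congr
      fun y hy => hf y (hk.trans_le hy.1))).bddBelow
  calc 1 / 4 * ν * (1 - ν) * sInf (f '' Icc k K)
      ≤ 1 / 4 * ν * (1 - ν) * f x :=
        mul_le_mul_of_nonneg_left (csInf_le hbdd ⟨x, hx, rfl⟩) (by nlinarith [hν.1, hν.2])
    _ = ν * (1 - ν) / 2 * (min x 1 * Real.log x ^ 2) := by
        rw [hf x hx0, Real.add_one_sub_abs_sub_one]; ring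
    _ ≤ 1 - ν + ν * x - x ^ ν := (Real.one_sub_add_mul_sub_rpow_bounds hx0 hν).1

theorem one_sub_add_mul_sub_rpow_le_mul_sSup_image (hk : 0 < k) (hν : ν ∈ Icc 0 1)
    (hf : ∀ x > (0 : ℝ), f x = (x + 1 + |x - 1|) * Real.log x ^ 2) (hx : x ∈ Icc k K) :
    1 - ν + ν * x - x ^ ν ≤ 1 / 4 * ν * (1 - ν) * sSup (f '' Icc k K) := by
  have hx0 : 0 < x := hk.trans_le hx.1
  have hbdd : BddAbove (f '' Icc k K) :=
    (isCompact_Icc.image_of_continuousOn ((continuousOn_mul_log_sq_Icc (by fun_prop) hk).congr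
      fun y hy => hf y (hk.trans_le hy.1))).bddAbove
  calc 1 - ν + ν * x - x ^ ν ≤ ν * (1 - ν) / 2 * (max x 1 * Real.log x ^ 2) :=
        (Real.one_sub_add_mul_sub_rpow_bounds hx0 hν).2
    _ = 1 / 4 * ν * (1 - ν) * f x := by rw [hf x hx0, Real.add_one_add_abs_sub_one]; ring
    _ ≤ 1 / 4 * ν * (1 - ν) * sSup (f '' Icc k K) :=
        mul_le_mul_of_nonneg_left (le_csSup hbdd ⟨x, hx, rfl⟩) (by nlinarith [hν.1, hν.2])

end Bounds

section CStarAlgebra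

variable {𝒜 : Type*} [CStarAlgebra 𝒜] [PartialOrder 𝒜] [StarOrderedRing 𝒜]

theorem spectrum_subset_Icc_of_smul_one_le_of_le_smul_one {a : 𝒜} {k K : ℝ}
    (ha : IsSelfAdjoint a) (hk : k • (1 : 𝒜) ≤ a) (hK : a ≤ K • (1 : 𝒜)) :
    spectrum ℝ a ⊆ Icc k K := fun x hx =>
  ⟨(algebraMap_le_iff_le_spectrum ha).1 (by rwa [Algebra.algebraMap_eq_smul_one]) x hx,
    (le_algebraMap_iff_spectrum_le ha).1 (by rwa [Algebra.algebraMap_eq_smul_one]) x hx⟩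

theorem cfc_one_sub_add_mul_sub_rpow {a : 𝒜} (ha : 0 ≤ a) {ν : ℝ} (hν : 0 ≤ ν) :
    cfc (fun x : ℝ => 1 - ν + ν * x - x ^ ν) a = (1 - ν) • (1 : 𝒜) + ν • a - a ^ ν := by
  have : ContinuousOn (fun x : ℝ => x ^ ν) (spectrum ℝ a) :=
    continuousOn_id.rpow_const fun _ _ => Or.inr hν
  rw [cfc_sub _ _ a, cfc_const_add _ _ a, cfc_const_mul_id _ a, CFC.rpow_eq_cfc_real ha,
    Algebra.algebraMap_eq_smul_one]

theorem smul_one_le_one_sub_smul_add_smul_sub_rpow {a : 𝒜} (ha : 0 ≤ a) {ν c : ℝ}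
    (hν : 0 ≤ ν) (h : ∀ x ∈ spectrum ℝ a, c ≤ 1 - ν + ν * x - x ^ ν) :
    c • (1 : 𝒜) ≤ (1 - ν) • 1 + ν • a - a ^ ν := by
  rw [← cfc_one_sub_add_mul_sub_rpow ha hν, ← Algebra.algebraMap_eq_smul_one]
  exact algebraMap_le_cfc _ _ a h
    (by fun_prop (disch := exact fun _ _ => Or.inr hν))

theorem one_sub_smul_add_smul_sub_rpow_le_smul_one {a : 𝒜} (ha : 0 ≤ a) {ν c : ℝ}
    (hν : 0 ≤ ν) (h : ∀ x ∈ spectrum ℝ a, 1 - ν + ν * x - x ^ ν ≤ c) :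
    (1 - ν) • 1 + ν • a - a ^ ν ≤ c • (1 : 𝒜) := by
  rw [← cfc_one_sub_add_mul_sub_rpow ha hν, ← Algebra.algebraMap_eq_smul_one]
  exact cfc_le_algebraMap _ _ a h
    (by fun_prop (disch := exact fun _ _ => Or.inr hν))

theorem sqrt_mul_smul_one_mul_sqrt {a : 𝒜} (ha : 0 ≤ a) (c : ℝ) :
    CFC.sqrt a * (c • (1 : 𝒜)) * CFC.sqrt a = c • a := by
  rw [mul_smul_comm, mul_one, smul_mul_assoc, CFC.sqrt_mul_sqrt_self a ha]

theorem sqrt_mul_conj_rpow_neg_half_mul_sqrt {a : 𝒜} (ha : IsStrictlyPositive a) (b : 𝒜) :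
    CFC.sqrt a * (a ^ (-(1 / 2) : ℝ) * b * a ^ (-(1 / 2) : ℝ)) * CFC.sqrt a = b := by
  have h₁ : a ^ (1 / 2 : ℝ) * a ^ (-(1 / 2) : ℝ) = 1 := CFC.rpow_mul_rpow_neg _ ha
  have h₂ : a ^ (-(1 / 2) : ℝ) * a ^ (1 / 2 : ℝ) = 1 := CFC.rpow_neg_mul_rpow _ ha
  rw [CFC.sqrt_eq_rpow]
  calc _ = a ^ (1 / 2 : ℝ) * a ^ (-(1 / 2) : ℝ) * b * (a ^ (-(1 / 2) : ℝ) * a ^ (1 / 2 : ℝ)) := by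
        simp only [mul_assoc]
    _ = b := by rw [h₁, h₂, one_mul, mul_one]

theorem sqrt_mul_one_sub_smul_add_smul_sub_rpow_mul_sqrt {a b t : 𝒜} (ha : IsStrictlyPositive a)
    (ht : t = a ^ (-(1 / 2) : ℝ) * b * a ^ (-(1 / 2) : ℝ)) (ν : ℝ) :
    CFC.sqrt a * ((1 - ν) • 1 + ν • t - t ^ ν) * CFC.sqrt a
      = (1 - ν) • a + ν • b - CFC.sqrt a * t ^ ν * CFC.sqrt a := by
  subst ht
  simp only [mul_add, add_mul, mul_sub, sub_mul, mul_smul_comm, smul_mul_assoc, mul_one,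
    CFC.sqrt_mul_sqrt_self a ha.nonneg, sqrt_mul_conj_rpow_neg_half_mul_sqrt ha]

end CStarAlgebra

set_option synthInstance.maxHeartbeats 1000000 in
theorem stmt_17_general {H : Type*} [NormedAddCommGroup H] [InnerProductSpace ℂ H] [CompleteSpace H]
    (A B : H →L[ℂ] H) (hA : 0 ≤ A) (hAinv : IsUnit A)
    (k K : ℝ) (hk : 0 < k) (ν : ℝ) (hν : ν ∈ Set.Icc (0:ℝ) 1)
    (hkC : k • (1 : H →L[ℂ] H) ≤ CFC.rpow A (-(1/2) : ℝ) * B * CFC.rpow A (-(1/2) : ℝ))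
    (hCK : CFC.rpow A (-(1/2) : ℝ) * B * CFC.rpow A (-(1/2) : ℝ) ≤ K • (1 : H →L[ℂ] H))
    (fmin fmax : ℝ → ℝ)
    (hfmin : ∀ x > (0:ℝ), fmin x = (x + 1 - |x - 1|) * (Real.log x)^2)
    (hfmax : ∀ x > (0:ℝ), fmax x = (x + 1 + |x - 1|) * (Real.log x)^2) :
    (1/4 * ν * (1 - ν) * sInf (fmin '' Set.Icc k K)) • A
      ≤ (1 - ν) • A + ν • B -
        CFC.sqrt A * CFC.rpow (CFC.rpow A (-(1/2) : ℝ) * B * CFC.rpow A (-(1/2) : ℝ)) ν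
          * CFC.sqrt A ∧
    (1 - ν) • A + ν • B -
        CFC.sqrt A * CFC.rpow (CFC.rpow A (-(1/2) : ℝ) * B * CFC.rpow A (-(1/2) : ℝ)) ν
          * CFC.sqrt A
      ≤ (1/4 * ν * (1 - ν) * sSup (fmax '' Set.Icc k K)) • A := by
  set T := CFC.rpow A (-(1/2) : ℝ) * B * CFC.rpow A (-(1/2) : ℝ)
  have hT : 0 ≤ T := (smul_nonneg hk.le zero_le_one).trans hkC
  have hspec := spectrum_subset_Icc_of_smul_one_le_of_le_smul_one hT.isSelfAdjoint hkC hCK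
  have hconj := sqrt_mul_one_sub_smul_add_smul_sub_rpow_mul_sqrt
    (hAinv.isStrictlyPositive hA) (rfl : T = _) ν
  have hS := CFC.sqrt_nonneg A
  constructor
  · have hlow := smul_one_le_one_sub_smul_add_smul_sub_rpow hT hν.1 fun x hx =>
      mul_sInf_image_le_one_sub_add_mul_sub_rpow hk hν hfmin (hspec hx)
    have := conjugate_le_conjugate_of_nonneg hlow hS
    rwa [sqrt_mul_smul_one_mul_sqrt hA, hconj] at this
  · have hup := one_sub_smul_add_smul_sub_rpow_le_smul_one hT hν.1 fun x hx =>
      one_sub_add_mul_sub_rpow_le_mul_sSup_image hk hν hfmax (hspec hx)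
    have := conjugate_le_conjugate_of_nonneg hup hS
    rwa [sqrt_mul_smul_one_mul_sqrt hA, hconj] at this

set_option synthInstance.maxHeartbeats 1000000 in
theorem stmt_17 {H : Type*} [NormedAddCommGroup H] [InnerProductSpace ℂ H] [CompleteSpace H]
    (A B : H →L[ℂ] H) (hA : 0 ≤ A) (hB : 0 ≤ B) (hAinv : IsUnit A)
    (k K : ℝ) (hk : 0 < k) (hkK : k ≤ K) (ν : ℝ) (hν : ν ∈ Set.Icc (0:ℝ) 1)
    (hkC : k • (1 : H →L[ℂ] H) ≤ CFC.rpow A (-(1/2) : ℝ) * B * CFC.rpow A (-(1/2) : ℝ))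
    (hCK : CFC.rpow A (-(1/2) : ℝ) * B * CFC.rpow A (-(1/2) : ℝ) ≤ K • (1 : H →L[ℂ] H))
    (fmin fmax : ℝ → ℝ)
    (hfmin : ∀ x > (0:ℝ), fmin x = (x + 1 - |x - 1|) * (Real.log x)^2)
    (hfmax : ∀ x > (0:ℝ), fmax x = (x + 1 + |x - 1|) * (Real.log x)^2) :
    (1/4 * ν * (1 - ν) * sInf (fmin '' Set.Icc k K)) • A
      ≤ (1 - ν) • A + ν • B -
        CFC.sqrt A * CFC.rpow (CFC.rpow A (-(1/2) : ℝ) * B * CFC.rpow A (-(1/2) : ℝ)) ν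
          * CFC.sqrt A ∧
    (1 - ν) • A + ν • B -
        CFC.sqrt A * CFC.rpow (CFC.rpow A (-(1/2) : ℝ) * B * CFC.rpow A (-(1/2) : ℝ)) ν
          * CFC.sqrt A
      ≤ (1/4 * ν * (1 - ν) * sSup (fmax '' Set.Icc k K)) • A :=
  stmt_17_general A B hA hAinv k K hk ν hν hkC hCK fmin fmax hfmin hfmax
end

section
/- Let 0 < γ ≤ 1 ≤ Γ and let X be a selfadjoint operator on a complex Hilbert space with γ·I ≤ X ≤ Γ·I, and ν ∈ [0,1]. Then (1/(2Γ²))·ν·(1−ν)·(X−I)² ≤ ln((1−ν)·I + ν·X) − ν·ln X ≤ (1/(2γ²))·ν·(1−ν)·(X−I)² in the operator order. -/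
/-!
By the continuous functional calculus, with `spectrum X ⊆ [γ, Γ]`, both inequalities reduce to
`ν (1 - ν) (x - 1)² / (2 Γ²) ≤ f x ≤ ν (1 - ν) (x - 1)² / (2 γ²)` for `x ∈ [γ, Γ]`, where
`f x = log (1 - ν + ν x) - ν log x`. Now `f 1 = 0` and `f' x = ν (1 - ν) (x - 1) / p x` with
`p x = (1 - ν + ν x) x ∈ [γ², Γ²]`, so the differences of the two sides have derivatives of the
sign of `x - 1` and are therefore minimal at `x = 1`.
-/

open Real Set

theorem isMinOn_of_sub_mul_deriv_nonneg {h h' : ℝ → ℝ} {a b c : ℝ} (hc : c ∈ Icc a b)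
    (hderiv : ∀ y ∈ Icc a b, HasDerivAt h (h' y) y)
    (hsign : ∀ y ∈ Icc a b, 0 ≤ (y - c) * h' y) :
    IsMinOn h (Icc a b) c := by
  have hcont : ContinuousOn h (Icc a b) := fun y hy =>
    (hderiv y hy).continuousAt.continuousWithinAt
  intro x hx
  rcases le_total x c with hxc | hcx
  · have hanti : AntitoneOn h (Icc a c) := by
      refine antitoneOn_of_hasDerivWithinAt_nonpos (convex_Icc a c)
        (hcont.mono (Icc_subset_Icc_right hc.2)) (f' := h') (fun y hy => ?_) fun y hy => ?_
      · rw [interior_Icc] at hy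
        exact (hderiv y ⟨hy.1.le, hy.2.le.trans hc.2⟩).hasDerivWithinAt
      · rw [interior_Icc] at hy
        exact nonpos_of_mul_nonneg_right (hsign y ⟨hy.1.le, hy.2.le.trans hc.2⟩)
          (sub_neg.2 hy.2)
    exact hanti ⟨hx.1, hxc⟩ ⟨hc.1, le_rfl⟩ hxc
  · have hmono : MonotoneOn h (Icc c b) := by
      refine monotoneOn_of_hasDerivWithinAt_nonneg (convex_Icc c b)
        (hcont.mono (Icc_subset_Icc_left hc.1)) (f' := h') (fun y hy => ?_) fun y hy => ?_
      · rw [interior_Icc] at hy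
        exact (hderiv y ⟨hc.1.trans hy.1.le, hy.2.le⟩).hasDerivWithinAt
      · rw [interior_Icc] at hy
        exact nonneg_of_mul_nonneg_right (hsign y ⟨hc.1.trans hy.1.le, hy.2.le⟩)
          (sub_pos.2 hy.1)
    exact hmono ⟨le_rfl, hc.2⟩ ⟨hcx, hx.2⟩ hcx

section Scalar

variable {ν : ℝ}

theorem one_sub_add_mul_pos_s19 (hν : ν ∈ Icc (0 : ℝ) 1) {y : ℝ} (hy : 0 < y) :
    0 < 1 - ν + ν * y := by
  obtain ⟨hν0, hν1⟩ := hν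
  nlinarith [mul_nonneg hν0 hy.le]

theorem hasDerivAt_log_one_sub_add_mul_sub (hν : ν ∈ Icc (0 : ℝ) 1) {y : ℝ} (hy : 0 < y) :
    HasDerivAt (fun x => log (1 - ν + ν * x) - ν * log x)
      (ν * (1 - ν) * (y - 1) / ((1 - ν + ν * y) * y)) y := by
  have hp := one_sub_add_mul_pos_s19 hν hy
  have hlin : HasDerivAt (fun x : ℝ => 1 - ν + ν * x) ν y := by
    simpa using ((hasDerivAt_id y).const_mul ν).const_add (1 - ν)
  refine ((hlin.log hp.ne').sub ((hasDerivAt_log hy.ne').const_mul ν)).congr_deriv ?_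
  field_simp
  ring

theorem continuousOn_log_one_sub_add_mul_sub (hν : ν ∈ Icc (0 : ℝ) 1) :
    ContinuousOn (fun x => log (1 - ν + ν * x) - ν * log x) (Ioi 0) := fun _ hy =>
  (hasDerivAt_log_one_sub_add_mul_sub hν hy).continuousAt.continuousWithinAt

variable {a b c : ℝ}

theorem mul_sq_sub_one_le_log_one_sub_add_mul_sub (hν : ν ∈ Icc (0 : ℝ) 1) (ha : 0 < a)
    (h1 : (1 : ℝ) ∈ Icc a b)
    (hc : ∀ y ∈ Icc a b, 2 * c * ((1 - ν + ν * y) * y) ≤ ν * (1 - ν))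
    {x : ℝ} (hx : x ∈ Icc a b) :
    c * (x - 1) ^ 2 ≤ log (1 - ν + ν * x) - ν * log x := by
  have hmin :
      IsMinOn (fun y => log (1 - ν + ν * y) - ν * log y - c * (y - 1) ^ 2) (Icc a b) 1 := by
    refine isMinOn_of_sub_mul_deriv_nonneg h1
      (h' := fun y => (y - 1) * (ν * (1 - ν) / ((1 - ν + ν * y) * y) - 2 * c))
      (fun y hy => ?_) fun y hy => ?_
    · refine ((hasDerivAt_log_one_sub_add_mul_sub hν (ha.trans_le hy.1)).sub
        ((((hasDerivAt_id y).sub_const 1).pow 2).const_mul c)).congr_deriv ?_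
      simp only [id, Nat.cast_ofNat]
      ring
    · have hpy := mul_pos (one_sub_add_mul_pos_s19 hν (ha.trans_le hy.1)) (ha.trans_le hy.1)
      have hk := sub_nonneg.2 ((le_div_iff₀ hpy).2 (hc y hy))
      simpa only [← mul_assoc] using mul_nonneg (mul_self_nonneg (y - 1)) hk
  simpa using hmin hx

theorem log_one_sub_add_mul_sub_le_mul_sq_sub_one (hν : ν ∈ Icc (0 : ℝ) 1) (ha : 0 < a)
    (h1 : (1 : ℝ) ∈ Icc a b)
    (hc : ∀ y ∈ Icc a b, ν * (1 - ν) ≤ 2 * c * ((1 - ν + ν * y) * y))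
    {x : ℝ} (hx : x ∈ Icc a b) :
    log (1 - ν + ν * x) - ν * log x ≤ c * (x - 1) ^ 2 := by
  have hmin :
      IsMinOn (fun y => c * (y - 1) ^ 2 - (log (1 - ν + ν * y) - ν * log y)) (Icc a b) 1 := by
    refine isMinOn_of_sub_mul_deriv_nonneg h1
      (h' := fun y => (y - 1) * (2 * c - ν * (1 - ν) / ((1 - ν + ν * y) * y)))
      (fun y hy => ?_) fun y hy => ?_
    · refine ((((hasDerivAt_id y).sub_const 1).pow 2).const_mul c).sub
        (hasDerivAt_log_one_sub_add_mul_sub hν (ha.trans_le hy.1)) |>.congr_deriv ?_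
      simp only [id, Nat.cast_ofNat]
      ring
    · have hpy := mul_pos (one_sub_add_mul_pos_s19 hν (ha.trans_le hy.1)) (ha.trans_le hy.1)
      have hk := sub_nonneg.2 ((div_le_iff₀ hpy).2 (hc y hy))
      simpa only [← mul_assoc] using mul_nonneg (mul_self_nonneg (y - 1)) hk
  simpa using hmin hx

theorem one_sub_add_mul_mul_self_mem_Icc {γ Γ : ℝ} (hν : ν ∈ Icc (0 : ℝ) 1) (hγ : 0 < γ)
    (hγ1 : γ ≤ 1) (h1Γ : 1 ≤ Γ) {y : ℝ} (hy : y ∈ Icc γ Γ) :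
    (1 - ν + ν * y) * y ∈ Icc (γ ^ 2) (Γ ^ 2) := by
  obtain ⟨hν0, hν1⟩ := hν
  have hp : 1 - ν + ν * y ∈ Icc γ Γ := ⟨by nlinarith [hy.1], by nlinarith [hy.2]⟩
  rw [sq, sq]
  exact ⟨mul_le_mul hp.1 hy.1 hγ.le (hγ.trans_le hp.1).le,
    mul_le_mul hp.2 hy.2 (hγ.trans_le hy.1).le (zero_le_one.trans h1Γ)⟩

theorem log_one_sub_add_mul_sub_mem_Icc {γ Γ : ℝ} (hν : ν ∈ Icc (0 : ℝ) 1) (hγ : 0 < γ)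
    (hγ1 : γ ≤ 1) (h1Γ : 1 ≤ Γ) {x : ℝ} (hx : x ∈ Icc γ Γ) :
    log (1 - ν + ν * x) - ν * log x ∈
      Icc (1 / (2 * Γ ^ 2) * ν * (1 - ν) * (x - 1) ^ 2)
        (1 / (2 * γ ^ 2) * ν * (1 - ν) * (x - 1) ^ 2) := by
  have h1 : (1 : ℝ) ∈ Icc γ Γ := ⟨hγ1, h1Γ⟩
  have hνν : 0 ≤ ν * (1 - ν) := mul_nonneg hν.1 (sub_nonneg.2 hν.2)
  have hΓ : 0 < Γ ^ 2 := by positivity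
  refine ⟨mul_sq_sub_one_le_log_one_sub_add_mul_sub hν hγ h1 (fun y hy => ?_) hx,
    log_one_sub_add_mul_sub_le_mul_sq_sub_one hν hγ h1 (fun y hy => ?_) hx⟩
  all_goals
    have hpy := one_sub_add_mul_mul_self_mem_Icc hν hγ hγ1 h1Γ hy
  · calc 2 * (1 / (2 * Γ ^ 2) * ν * (1 - ν)) * ((1 - ν + ν * y) * y)
        = ν * (1 - ν) * ((1 - ν + ν * y) * y / Γ ^ 2) := by field_simp
      _ ≤ ν * (1 - ν) := mul_le_of_le_one_right hνν ((div_le_one hΓ).2 hpy.2)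
  · calc ν * (1 - ν) ≤ ν * (1 - ν) * ((1 - ν + ν * y) * y / γ ^ 2) :=
          le_mul_of_one_le_right hνν ((one_le_div (by positivity)).2 hpy.1)
      _ = 2 * (1 / (2 * γ ^ 2) * ν * (1 - ν)) * ((1 - ν + ν * y) * y) := by field_simp

end Scalar

section Operator

variable {A : Type*} [CStarAlgebra A]

theorem smul_sub_one_sq_eq_cfc {a : A} (ha : IsSelfAdjoint a) (c : ℝ) :
    c • (a - 1) ^ 2 = cfc (fun x : ℝ => c * (x - 1) ^ 2) a := by
  rw [cfc_const_mul c (fun x : ℝ => (x - 1) ^ 2) a, cfc_pow (fun x : ℝ => x - 1) 2 a,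
    cfc_sub (fun x : ℝ => x) (fun _ => 1) a, cfc_id' ℝ a, cfc_const_one ℝ a]

theorem cfc_log_one_sub_smul_add_smul_sub {a : A} (ha : IsSelfAdjoint a)
    (hpos : ∀ x ∈ spectrum ℝ a, 0 < x) {ν : ℝ} (hν : ν ∈ Icc (0 : ℝ) 1) :
    cfc log ((1 - ν) • (1 : A) + ν • a) - ν • cfc log a
      = cfc (fun x => log (1 - ν + ν * x) - ν * log x) a := by
  have hlog : ContinuousOn log (spectrum ℝ a) :=
    continuousOn_log.mono fun x hx => (hpos x hx).ne'
  have hlogLin : ContinuousOn log ((fun x : ℝ => 1 - ν + ν * x) '' spectrum ℝ a) :=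
    continuousOn_log.mono <| by
      rintro - ⟨x, hx, rfl⟩
      exact (one_sub_add_mul_pos_s19 hν (hpos x hx)).ne'
  have hlin : (1 - ν) • (1 : A) + ν • a = cfc (fun x : ℝ => 1 - ν + ν * x) a := by
    rw [cfc_const_add (1 - ν) (fun x => ν * x) a, cfc_const_mul ν (fun x : ℝ => x) a,
      cfc_id' ℝ a, Algebra.algebraMap_eq_smul_one]
  rw [hlin, ← cfc_comp' log (fun x : ℝ => 1 - ν + ν * x) a, ← cfc_const_mul ν log a]
  exact (cfc_sub _ _ a (hlogLin.comp (by fun_prop) (mapsTo_image _ _))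
    (continuousOn_const.mul hlog)).symm

variable [PartialOrder A] [StarOrderedRing A]

theorem spectrum_subset_Icc_of_smul_one_le_of_le_smul_one_s19 {a : A} (ha : IsSelfAdjoint a)
    {r s : ℝ} (hr : r • (1 : A) ≤ a) (hs : a ≤ s • (1 : A)) :
    spectrum ℝ a ⊆ Icc r s := by
  rw [← Algebra.algebraMap_eq_smul_one] at hr hs
  exact fun x hx => ⟨(algebraMap_le_iff_le_spectrum ha).1 hr x hx,
    (le_algebraMap_iff_spectrum_le ha).1 hs x hx⟩

end Operator

theorem stmt_19 {H : Type*} [NormedAddCommGroup H] [InnerProductSpace ℂ H] [CompleteSpace H]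
    (γ Γ : ℝ) (hγ : 0 < γ) (hγ1 : γ ≤ 1) (h1Γ : 1 ≤ Γ)
    (X : H →L[ℂ] H) (hX : IsSelfAdjoint X)
    (hγX : γ • (1 : H →L[ℂ] H) ≤ X) (hXΓ : X ≤ Γ • (1 : H →L[ℂ] H))
    (ν : ℝ) (hν : ν ∈ Set.Icc (0:ℝ) 1) :
    (1/(2 * Γ^2) * ν * (1 - ν)) • (X - 1)^2
      ≤ cfc Real.log ((1 - ν) • (1 : H →L[ℂ] H) + ν • X) - ν • cfc Real.log X ∧
    cfc Real.log ((1 - ν) • (1 : H →L[ℂ] H) + ν • X) - ν • cfc Real.log X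
      ≤ (1/(2 * γ^2) * ν * (1 - ν)) • (X - 1)^2 := by
  have hspec := spectrum_subset_Icc_of_smul_one_le_of_le_smul_one_s19 hX hγX hXΓ
  have hpos : ∀ x ∈ spectrum ℝ X, 0 < x := fun x hx => hγ.trans_le (hspec hx).1
  have hbounds x (hx : x ∈ spectrum ℝ X) :=
    log_one_sub_add_mul_sub_mem_Icc hν hγ hγ1 h1Γ (hspec hx)
  have hcont := (continuousOn_log_one_sub_add_mul_sub hν).mono hpos
  rw [cfc_log_one_sub_smul_add_smul_sub hX hpos hν,
    smul_sub_one_sq_eq_cfc hX, smul_sub_one_sq_eq_cfc hX]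
  exact ⟨cfc_mono (fun x hx => (hbounds x hx).1) (by fun_prop) hcont,
    cfc_mono (fun x hx => (hbounds x hx).2) hcont (by fun_prop)⟩
end
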